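/- arXiv:0706.4417 — 12 statements merged into one kernel-verified Lean document; each statement's English description precedes it below -/
import Mathlib

section
/- Let n ≥ 3 and let c₁,…,cₙ be nonzero integers such that at least one cᵢ is positive and at least one cᵢ is negative. Then for every 2-coloring χ : ℤ⁺ → {0,1} of the positive integers there exist positive integers x₁,…,xₙ, all of the same color under χ, satisfying c₁x₁ + c₂x₂ + ⋯ + cₙxₙ = 0. -/
/-!
Sending one positive coefficient to `x`, the other positive ones to `y` and the negative ones
to `z` reduces the equation to `a x + b y = e z` with `a, b, e > 0`; as `n ≥ 3`, two
coefficients have the same sign, and after a global sign change both are positive.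

Suppose `χ` has no monochromatic solution of `a x + b y = e z`, and let `ρ n = χ ((a + b) n)`.
The solutions `(e m, e m, (a + b) m)` give `χ (e m) ≠ χ ((a + b) m)`, hence
`ρ (e m) ≠ ρ ((a + b) m)`. The solutions `(e s, e t, a s + b t)` give `χ (a s + b t) = ρ s`
whenever `ρ s = ρ t`; as `a (x + b) + b y = a x + b (y + a)`, a change of colour of `ρ` from
`p` to `q` along the step `b` rules out one from `q` to `p` along the step `a`. So for `g = a`
or `g = b` some colour class of `ρ` is closed under `+ g`. If `e ≤ a + b`, this class then
contains no `ρ (e g m)`, hence every `ρ ((a + b) g m)`, absurd for `(a + b) g e = e g (a + b)`.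
-/

open Finset

def MonoSolutionFree (χ : ℕ → Fin 2) (a b e : ℕ) : Prop :=
  ∀ x y z, 0 < x → 0 < y → 0 < z → χ x = χ y → χ y = χ z → a * x + b * y ≠ e * z

namespace MonoSolutionFree

variable {χ : ℕ → Fin 2} {a b e : ℕ}

theorem color_mul_ne (h : MonoSolutionFree χ a b e) (ha : 0 < a) (he : 0 < e) {m : ℕ} (hm : 0 < m) :
    χ (e * m) ≠ χ ((a + b) * m) := fun hχ =>
  h (e * m) (e * m) ((a + b) * m) (by positivity) (by positivity) (by positivity) rfl hχ (by ring)

theorem color_add_eq (h : MonoSolutionFree χ a b e) (ha : 0 < a) (he : 0 < e) {s t : ℕ}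
    (hs : 0 < s) (ht : 0 < t) (hst : χ ((a + b) * s) = χ ((a + b) * t)) :
    χ (a * s + b * t) = χ ((a + b) * s) := by
  have hs' := h.color_mul_ne ha he hs
  have ht' := h.color_mul_ne ha he ht
  have hest : χ (e * s) = χ (e * t) := by omega
  have hnew : χ (e * t) ≠ χ (a * s + b * t) := fun hχ =>
    h (e * s) (e * t) (a * s + b * t) (by positivity) (by positivity) (by positivity) hest hχ
      (by ring)
  omega

theorem not_opposite_jumps (h : MonoSolutionFree χ a b e) (ha : 0 < a) (he : 0 < e)
    {x y : ℕ} (hx : 0 < x) (hy : 0 < y) (hjump : χ ((a + b) * x) ≠ χ ((a + b) * (x + b)))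
    (hy₀ : χ ((a + b) * y) = χ ((a + b) * (x + b)))
    (hy₁ : χ ((a + b) * (y + a)) = χ ((a + b) * x)) : False := by
  have h₁ := h.color_add_eq ha he (by omega : 0 < x + b) hy hy₀.symm
  have h₂ := h.color_add_eq ha he hx (by omega : 0 < y + a) hy₁.symm
  rw [show a * (x + b) + b * y = a * x + b * (y + a) by ring] at h₁
  exact hjump (h₂.symm.trans h₁)

end MonoSolutionFree

theorem eq_of_closed_add {α : Type*} {ρ : ℕ → α} {g : ℕ} {c : α}
    (hclosed : ∀ x, 0 < x → ρ x = c → ρ (x + g) = c) (k : ℕ) {x : ℕ} (hx : 0 < x)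
    (hc : ρ x = c) : ρ (x + g * k) = c := by
  induction k with
  | zero => simpa using hc
  | succ k ih => simpa [mul_add, ← add_assoc] using hclosed _ (by omega) ih

theorem exists_color_mul_eq_of_closed {ρ : ℕ → Fin 2} {g p q : ℕ} (hg : 0 < g) (hp : 0 < p)
    (hq : 0 < q) {c : Fin 2} (hclosed : ∀ x, 0 < x → ρ x = c → ρ (x + g) = c) :
    ∃ m, 0 < m ∧ ρ (p * m) = ρ (q * m) := by
  wlog hpq : p ≤ q generalizing p q
  · obtain ⟨m, hm, hρ⟩ := this hq hp (by omega)
    exact ⟨m, hm, hρ.symm⟩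
  by_contra! hsep
  obtain ⟨d, rfl⟩ := Nat.exists_eq_add_of_le hpq
  have hoff : ∀ m, 0 < m → ρ (p * (g * m)) ≠ c := fun m hm hc =>
    hsep (g * m) (by positivity) <| by
      rw [hc, ← eq_of_closed_add hclosed (d * m) (by positivity) hc]
      ring_nf
  have h₁ := hoff p hp
  have h₂ := hoff (p + d) hq
  have h₃ := hsep (g * p) (by positivity)
  rw [show (p + d) * (g * p) = p * (g * (p + d)) by ring] at h₃
  omega

theorem exists_mono_solution {a b e : ℕ} (ha : 0 < a) (hb : 0 < b) (he : 0 < e)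
    (χ : ℕ → Fin 2) :
    ∃ x y z, 0 < x ∧ 0 < y ∧ 0 < z ∧ χ x = χ y ∧ χ y = χ z ∧ a * x + b * y = e * z := by
  by_contra! h
  change MonoSolutionFree χ a b e at h
  set ρ : ℕ → Fin 2 := fun n => χ ((a + b) * n)
  have hsep : ∀ m, 0 < m → ρ (e * m) ≠ ρ ((a + b) * m) := fun m hm => by
    simpa only [ρ, mul_left_comm] using h.color_mul_ne ha he (by positivity : 0 < (a + b) * m)
  suffices ∃ g, 0 < g ∧ ∃ c, ∀ x, 0 < x → ρ x = c → ρ (x + g) = c by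
    obtain ⟨g, hg, c, hclosed⟩ := this
    obtain ⟨m, hm, hρ⟩ := exists_color_mul_eq_of_closed (q := a + b) hg he (by omega) hclosed
    exact hsep m hm hρ
  by_cases hA : ∃ c, ∀ x, 0 < x → ρ x = c → ρ (x + a) = c
  · exact ⟨a, ha, hA⟩
  push Not at hA
  refine ⟨b, hb, 0, fun x hx hx₀ => ?_⟩
  by_contra hjump
  obtain ⟨y, hy, hy₀, hy₁⟩ := hA (ρ (x + b))
  have hjump' : ρ x ≠ ρ (x + b) := by omega
  have hy₁' : ρ (y + a) = ρ x := by omega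
  exact h.not_opposite_jumps ha he hx hy hjump' hy₀ hy₁'

theorem sum_mul_ite_sign {ι : Type*} [Fintype ι] [DecidableEq ι] (c : ι → ℤ) {i₀ : ι}
    (hi₀ : 0 < c i₀) (X Y Z : ℕ) :
    ∑ i, c i * ((if i = i₀ then X else if 0 < c i then Y else Z : ℕ) : ℤ) =
      c i₀ * X + (∑ i ∈ (univ.filter (0 < c ·)).erase i₀, c i) * Y +
        (∑ i ∈ univ.filter (¬0 < c ·), c i) * Z := by
  rw [← sum_filter_add_sum_filter_not univ (0 < c ·), ← add_sum_erase _ _ (by simpa using hi₀),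
    sum_mul, sum_mul]
  congr 1
  · congr 1
    · simp
    · refine sum_congr rfl fun i hi => ?_
      rw [if_neg (ne_of_mem_erase hi), if_pos (mem_filter.1 (mem_of_mem_erase hi)).2]
  · refine sum_congr rfl fun i hi => ?_
    have hi' := (mem_filter.1 hi).2
    rw [if_neg (by rintro rfl; exact hi' hi₀), if_neg hi']

theorem exists_mono_solution_of_two_pos {ι : Type*} [Fintype ι] [DecidableEq ι] (c : ι → ℤ)
    (χ : ℕ → Fin 2) {i₀ j₀ k : ι} (hij : i₀ ≠ j₀) (hi₀ : 0 < c i₀) (hj₀ : 0 < c j₀)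
    (hk : c k < 0) :
    ∃ x : ι → ℕ, (∀ i, 0 < x i) ∧ (∀ i j, χ (x i) = χ (x j)) ∧ ∑ i, c i * (x i : ℤ) = 0 := by
  set b := ∑ i ∈ (univ.filter (0 < c ·)).erase i₀, c i
  set e := ∑ i ∈ univ.filter (¬0 < c ·), c i
  have hb : c j₀ ≤ b :=
    single_le_sum (fun i hi => (mem_filter.1 (mem_of_mem_erase hi)).2.le) (by simp [hij.symm, hj₀])
  have he : -c k ≤ -e := by
    rw [← sum_neg_distrib]
    refine single_le_sum (f := (-c ·)) (fun i hi => ?_) (by simp [hk.le])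
    simp only [not_lt, mem_filter, mem_univ, true_and] at hi
    omega
  obtain ⟨A, hA⟩ := Int.eq_ofNat_of_zero_le hi₀.le
  obtain ⟨B, hB⟩ := Int.eq_ofNat_of_zero_le (hj₀.trans_le hb).le
  obtain ⟨E, hE⟩ := Int.eq_ofNat_of_zero_le (he.trans' (neg_nonneg.2 hk.le))
  obtain ⟨X, Y, Z, hX, hY, hZ, hXY, hYZ, hsol⟩ :=
    exists_mono_solution (a := A) (b := B) (e := E) (by omega) (by omega) (by omega) χ
  refine ⟨fun i => if i = i₀ then X else if 0 < c i then Y else Z, fun i => ?_, fun i j => ?_, ?_⟩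
  · dsimp only
    split_ifs <;> assumption
  · have hcol : ∀ i, χ (if i = i₀ then X else if 0 < c i then Y else Z) = χ X := fun i => by
      split_ifs <;> simp only [hXY, hYZ]
    simp only [hcol]
  · rw [sum_mul_ite_sign c hi₀]
    change c i₀ * X + b * Y + e * Z = 0
    rw [← neg_neg e, hA, hB, hE]
    linear_combination (by exact_mod_cast hsol : (A * X + B * Y : ℤ) = E * Z)

/-- Rado's two-color theorem: a linear homogeneous equation with at least three
variables, all coefficients nonzero, having both positive and negative coefficients,
admits a monochromatic solution in the positive integers under any 2-coloring. -/
theorem rado_two_color (n : ℕ) (hn : 3 ≤ n) (c : Fin n → ℤ)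
    (hne : ∀ i, c i ≠ 0) (hpos : ∃ i, 0 < c i) (hneg : ∃ i, c i < 0)
    (χ : ℕ → Fin 2) :
    ∃ x : Fin n → ℕ, (∀ i, 0 < x i) ∧ (∀ i j, χ (x i) = χ (x j)) ∧
      ∑ i, c i * (x i : ℤ) = 0 := by
  obtain ⟨i, j, hij, hsign⟩ :=
    Fintype.exists_ne_map_eq_of_card_lt (fun i => decide (0 < c i))
      (by simp only [Fintype.card_bool, Fintype.card_fin]; omega)
  simp only [decide_eq_decide] at hsign
  by_cases hi : 0 < c i
  · obtain ⟨k, hk⟩ := hneg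
    exact exists_mono_solution_of_two_pos c χ hij hi (hsign.1 hi) hk
  · have hneg' : ∀ l, ¬0 < c l → 0 < -c l := fun l hl => by have := hne l; omega
    obtain ⟨k, hk⟩ := hpos
    obtain ⟨x, hx, hχ, hsum⟩ := exists_mono_solution_of_two_pos (-c ·) χ hij (hneg' i hi)
      (hneg' j (hsign.not.1 hi)) (neg_neg_of_pos hk)
    refine ⟨x, hx, hχ, ?_⟩
    simpa only [neg_mul, sum_neg_distrib, neg_eq_zero] using hsum
end

section
/- Let j ≥ 4 be an integer. Then every 2-coloring χ : {1,…,j(j+1)/2} → {0,1} admits a monochromatic solution to x + y = j·w, i.e. there exist x, y, w ∈ {1,…,j(j+1)/2} with χ(x) = χ(y) = χ(w) and x + y = j·w. -/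
/-!
Suppose `χ` has no monochromatic solution and call the colour of `1` red. First `j + 1` is red:
otherwise let `1, …, t` be the initial red run; if `2t ≥ j` then `⌊j/2⌋ + ⌈j/2⌉ = j · 1` is red,
and if `2t < j` then `1 + (jt - 1) = jt` forces `jt - 1` blue, so `(j + 1) + (jt - 1) = j(t + 1)`
is blue. Next `N = j(j+1)/2` is blue (`N + N = j(j + 1)`) and `M = j(j-1)/2` is red
(`M + M = j(j - 1)`, with `j - 1` blue). Descending from `t = j - 1`, every `t` with
`j ≤ 2t < 2j` is blue, since `Z = jt - M` satisfies `M + Z = jt` and `N + Z = j(t + 1)`.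
For `j = 2m` this makes `N + m = j(m + 1)` blue. For `j = 2m + 1` the solutions
`N + j = j(m + 2)`, `N + j(m - 1) = j · 2m`, `j(m - 1) + j = jm`, `(m + 1) + (N - m - 1) = N`
and `m + (N - m) = N` force `j` red, `m` blue and `N - m - 1`, `N - m` red, and
`(N - m - 1) + (N - m) = j · j` is red.
-/

open Finset

lemma fin_two_eq_of_ne_of_ne {a b c : Fin 2} (ha : a ≠ c) (hb : b ≠ c) : a = b := by omega

def IsSolutionFree (χ : ℕ → Fin 2) (j N : ℕ) : Prop :=
  ∀ ⦃x y w⦄, x ∈ Icc 1 N → y ∈ Icc 1 N → w ∈ Icc 1 N → x + y = j * w → χ x = χ y → χ y ≠ χ w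

namespace IsSolutionFree

variable {χ : ℕ → Fin 2} {j N x y w t : ℕ} {c : Fin 2}

theorem color_mul_ne (hχ : IsSolutionFree χ j N) (hx : x ∈ Icc 1 N) (hy : y ∈ Icc 1 N)
    (hw : w ∈ Icc 1 N) (h : x + y = j * w) (hxc : χ x = c) (hyc : χ y = c) : χ w ≠ c := by
  intro hwc
  exact hχ hx hy hw h (hxc.trans hyc.symm) (hyc.trans hwc.symm)

theorem color_summand_ne (hχ : IsSolutionFree χ j N) (hx : x ∈ Icc 1 N) (hy : y ∈ Icc 1 N)
    (hw : w ∈ Icc 1 N) (h : x + y = j * w) (hxc : χ x = c) (hwc : χ w = c) : χ y ≠ c :=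
  fun hyc => hχ.color_mul_ne hx hy hw h hxc hyc hwc

theorem color_mul_eq (hχ : IsSolutionFree χ j N) (hx : x ∈ Icc 1 N) (hy : y ∈ Icc 1 N)
    (hw : w ∈ Icc 1 N) (h : x + y = j * w) (hxc : χ x ≠ c) (hyc : χ y ≠ c) : χ w = c := by
  by_contra hwc
  exact hχ.color_mul_ne hx hy hw h (fin_two_eq_of_ne_of_ne hxc hwc)
    (fin_two_eq_of_ne_of_ne hyc hwc) rfl

theorem color_summand_eq (hχ : IsSolutionFree χ j N) (hx : x ∈ Icc 1 N) (hy : y ∈ Icc 1 N)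
    (hw : w ∈ Icc 1 N) (h : x + y = j * w) (hxc : χ x ≠ c) (hwc : χ w ≠ c) : χ y = c := by
  by_contra hyc
  exact hwc (hχ.color_mul_eq hx hy hw h hxc hyc)

theorem color_ne_of_two_mul_eq (hχ : IsSolutionFree χ j N) (hx : x ∈ Icc 1 N)
    (hw : w ∈ Icc 1 N) (h : 2 * x = j * w) : χ x ≠ χ w :=
  fun hxw => hχ.color_mul_ne hx hx hw (by omega) rfl rfl hxw.symm

theorem color_sub_one_ne (hχ : IsSolutionFree χ j N) (hj : 2 ≤ j) (hjN : j ≤ N) :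
    χ (j - 1) ≠ χ 1 :=
  hχ.color_summand_ne (mem_Icc.2 ⟨le_rfl, by omega⟩) (mem_Icc.2 ⟨by omega, by omega⟩)
    (mem_Icc.2 ⟨le_rfl, by omega⟩) (by omega) rfl rfl

theorem two_mul_lt_of_color_eq (hχ : IsSolutionFree χ j N) (hj : 2 ≤ j) (htN : t ≤ N)
    (hrun : ∀ s, 1 ≤ s → s ≤ t → χ s = χ 1) : 2 * t < j := by
  by_contra! hjt
  exact hχ.color_mul_ne (x := j / 2) (y := j - j / 2) (mem_Icc.2 ⟨by omega, by omega⟩)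
    (mem_Icc.2 ⟨by omega, by omega⟩) (mem_Icc.2 ⟨le_rfl, by omega⟩) (by omega)
    (hrun _ (by omega) (by omega)) (hrun _ (by omega) (by omega)) rfl

theorem color_succ_eq_color_one (hχ : IsSolutionFree χ j N) (hj : 3 ≤ j)
    (hN : j * (j + 1) ≤ 2 * N) : χ (j + 1) = χ 1 := by
  have hjN : j + 1 ≤ N := by nlinarith
  by_contra hsucc
  have hjm : χ (j - 2 + 1) ≠ χ 1 := by
    simpa [show j - 2 + 1 = j - 1 by omega] using hχ.color_sub_one_ne (by omega) (by omega)
  have hex : ∃ s, χ (s + 1) ≠ χ 1 := ⟨j - 2, hjm⟩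
  set t := Nat.find hex
  have hspec : χ (t + 1) ≠ χ 1 := Nat.find_spec hex
  have hrun : ∀ s, 1 ≤ s → s ≤ t → χ s = χ 1 := by
    intro s hs hst
    simpa [Nat.sub_add_cancel hs] using Nat.find_min hex (m := s - 1) (by omega)
  have ht : 1 ≤ t := Nat.pos_of_ne_zero fun h => hspec (by rw [h])
  have htj : t ≤ j - 2 := Nat.find_min' hex hjm
  have h2t : 2 * t < j := hχ.two_mul_lt_of_color_eq (by omega) (by omega) hrun
  obtain ⟨Y, hY⟩ : ∃ Y, 1 + Y = j * t := ⟨j * t - 1, by have := Nat.mul_le_mul hj ht; omega⟩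
  have hYN : Y ∈ Icc 1 N := mem_Icc.2 ⟨by nlinarith, by nlinarith⟩
  have hYc : χ Y ≠ χ 1 := hχ.color_summand_ne (mem_Icc.2 ⟨le_rfl, by omega⟩) hYN
    (mem_Icc.2 ⟨ht, by omega⟩) hY rfl (hrun t ht le_rfl)
  exact hspec <| hχ.color_mul_eq (mem_Icc.2 ⟨by omega, hjN⟩) hYN
    (mem_Icc.2 ⟨by omega, by omega⟩) (by rw [mul_add, ← hY]; ring) hsucc hYc

theorem color_top_ne (hχ : IsSolutionFree χ j N) (hj : 2 ≤ j) (hN : 2 * N = j * (j + 1))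
    (hsucc : χ (j + 1) = χ 1) : χ N ≠ χ 1 :=
  hsucc ▸ hχ.color_ne_of_two_mul_eq (mem_Icc.2 ⟨by nlinarith, le_rfl⟩)
    (mem_Icc.2 ⟨by omega, by nlinarith⟩) hN

theorem color_ne_of_le_two_mul (hχ : IsSolutionFree χ j N) (hj : 2 ≤ j)
    (hN : 2 * N = j * (j + 1)) (hsucc : χ (j + 1) = χ 1) (ht : j ≤ 2 * t) (htj : t < j) :
    χ t ≠ χ 1 := by
  have hNc := hχ.color_top_ne hj hN hsucc
  obtain ⟨M, hM⟩ : ∃ M, M + j = N := ⟨N - j, Nat.sub_add_cancel (by nlinarith)⟩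
  have hM2 : 2 * M = j * (j - 1) := by
    obtain ⟨i, rfl⟩ : ∃ i, j = i + 1 := ⟨j - 1, by omega⟩
    simp only [Nat.add_sub_cancel]
    nlinarith
  have hMN : M ∈ Icc 1 N := mem_Icc.2 ⟨by nlinarith, by omega⟩
  have hMc : χ M = χ 1 := fin_two_eq_of_ne_of_ne
    (hχ.color_ne_of_two_mul_eq hMN (mem_Icc.2 ⟨by omega, by omega⟩) hM2)
    (hχ.color_sub_one_ne hj (by omega)).symm
  refine Nat.decreasingInduction' (P := fun k => χ k ≠ χ 1) (fun k hk htk hsucc_k => ?_)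
    (Nat.le_sub_one_of_lt htj) (hχ.color_sub_one_ne hj (by omega))
  obtain ⟨Z, hZ⟩ : ∃ Z, M + Z = j * k := ⟨j * k - M, Nat.add_sub_cancel' (by nlinarith)⟩
  have hZN : Z ∈ Icc 1 N := mem_Icc.2 ⟨by nlinarith, by nlinarith⟩
  have hkN : k ∈ Icc 1 N := mem_Icc.2 ⟨by omega, by nlinarith⟩
  intro hkc
  by_cases hZc : χ Z = χ 1
  · exact hχ.color_mul_ne hMN hZN hkN hZ hMc hZc hkc
  · exact hsucc_k <| hχ.color_mul_eq (mem_Icc.2 ⟨by nlinarith, le_rfl⟩) hZN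
      (mem_Icc.2 ⟨by omega, by nlinarith⟩) (by rw [mul_add, ← hZ]; omega) hNc hZc

theorem color_succ_ne_of_even (hχ : IsSolutionFree χ j N) (hj : 4 ≤ j)
    (hN : 2 * N = j * (j + 1)) (he : Even j) : χ (j + 1) ≠ χ 1 := by
  intro hsucc
  obtain ⟨m, rfl⟩ := he
  have hNc := hχ.color_top_ne (by omega) hN hsucc
  have hmc := hχ.color_ne_of_le_two_mul (t := m) (by omega) hN hsucc (by omega) (by omega)
  have hm1c := hχ.color_ne_of_le_two_mul (t := m + 1) (by omega) hN hsucc (by omega) (by omega)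
  exact hm1c <| hχ.color_mul_eq (mem_Icc.2 ⟨by nlinarith, le_rfl⟩)
    (mem_Icc.2 ⟨by omega, by nlinarith⟩) (mem_Icc.2 ⟨by omega, by nlinarith⟩) (by linarith)
    hNc hmc

theorem color_succ_ne_of_odd (hχ : IsSolutionFree χ j N) (hj : 4 ≤ j)
    (hN : 2 * N = j * (j + 1)) (ho : Odd j) : χ (j + 1) ≠ χ 1 := by
  intro hsucc
  have hblue : ∀ t, j ≤ 2 * t → t < j → χ t ≠ χ 1 := fun t ht htj =>
    hχ.color_ne_of_le_two_mul (by omega) hN hsucc ht htj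
  have hNc := hχ.color_top_ne (by omega) hN hsucc
  obtain ⟨n, rfl⟩ : ∃ n, j = 2 * n + 3 := by
    obtain ⟨m, rfl⟩ := ho
    exact ⟨m - 1, by omega⟩
  obtain rfl : N = (2 * n + 3) * (n + 2) := by nlinarith
  have hjc : χ (2 * n + 3) = χ 1 := hχ.color_summand_eq (mem_Icc.2 ⟨by nlinarith, le_rfl⟩)
    (mem_Icc.2 ⟨by omega, by nlinarith⟩) (mem_Icc.2 ⟨by omega, by nlinarith⟩) (w := n + 3)
    (by ring) hNc (hblue _ (by omega) (by omega))
  have hDc : χ ((2 * n + 3) * n) = χ 1 := hχ.color_summand_eq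
    (mem_Icc.2 ⟨by nlinarith, le_rfl⟩) (mem_Icc.2 ⟨by nlinarith, by nlinarith⟩)
    (mem_Icc.2 ⟨by omega, by nlinarith⟩) (w := 2 * n + 2)
    (by ring) hNc (hblue _ (by omega) (by omega))
  have hmc : χ (n + 1) ≠ χ 1 := hχ.color_mul_ne (mem_Icc.2 ⟨by nlinarith, by nlinarith⟩)
    (mem_Icc.2 ⟨by omega, by nlinarith⟩) (mem_Icc.2 ⟨by omega, by nlinarith⟩)
    (by ring) hDc hjc
  have hxc : χ (2 * (n + 1) * (n + 2)) = χ 1 := hχ.color_summand_eq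
    (mem_Icc.2 ⟨by omega, by nlinarith⟩) (mem_Icc.2 ⟨by nlinarith, by nlinarith⟩)
    (mem_Icc.2 ⟨by omega, by nlinarith⟩) (x := n + 2) (w := n + 2)
    (by ring) (hblue _ (by omega) (by omega)) (hblue _ (by omega) (by omega))
  have hyc : χ (2 * (n + 1) * (n + 2) + 1) = χ 1 := hχ.color_summand_eq
    (mem_Icc.2 ⟨by omega, by nlinarith⟩) (mem_Icc.2 ⟨by nlinarith, by nlinarith⟩)
    (mem_Icc.2 ⟨by omega, by nlinarith⟩) (x := n + 1) (w := n + 2)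
    (by ring) hmc (hblue _ (by omega) (by omega))
  exact hχ.color_mul_ne (mem_Icc.2 ⟨by nlinarith, by nlinarith⟩)
    (mem_Icc.2 ⟨by nlinarith, by nlinarith⟩) (mem_Icc.2 ⟨by omega, by nlinarith⟩)
    (by ring) hxc hyc hjc

end IsSolutionFree

/-- Every 2-coloring of `{1, ..., j*(j+1)/2}` admits a monochromatic solution
to `x + y = j * w`, for `j ≥ 4`. -/
theorem mono_solution_x_add_y_eq_jw (j : ℕ) (hj : 4 ≤ j) (χ : ℕ → Fin 2) :
    ∃ x y w : ℕ, x ∈ Finset.Icc 1 (j * (j + 1) / 2) ∧ y ∈ Finset.Icc 1 (j * (j + 1) / 2) ∧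
      w ∈ Finset.Icc 1 (j * (j + 1) / 2) ∧ χ x = χ y ∧ χ y = χ w ∧ x + y = j * w := by
  by_contra hmono
  have hχ : IsSolutionFree χ j (j * (j + 1) / 2) := fun x y w hx hy hw h hxy hyw =>
    hmono ⟨x, y, w, hx, hy, hw, hxy, hyw, h⟩
  have hN : 2 * (j * (j + 1) / 2) = j * (j + 1) :=
    Nat.mul_div_cancel' (Nat.even_mul_succ_self j).two_dvd
  have hsucc := hχ.color_succ_eq_color_one (by omega) hN.ge
  rcases Nat.even_or_odd j with he | ho
  · exact hχ.color_succ_ne_of_even hj hN he hsucc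
  · exact hχ.color_succ_ne_of_odd hj hN ho hsucc
end

section
/- Let k ≥ 1 and j ≥ 4 be integers. Then every 2-coloring χ : {1,…,j(j+1)/2} → {0,1} admits a monochromatic solution to x + y + k·z = (k+j)·w, i.e. there exist x, y, z, w ∈ {1,…,j(j+1)/2} with χ(x) = χ(y) = χ(z) = χ(w) and x + y + k·z = (k+j)·w. Hence RR(x+y+kz=(k+j)w) ≤ j(j+1)/2. -/
open Classical in
set_option maxHeartbeats 1000000 in
theorem rado_key (b N : ℕ) (hb : 4 ≤ b) (hN : 2*N = b*(b+1)) (χ : ℕ → Fin 2)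
    (sol : ∀ x y w : ℕ, 1 ≤ x → x ≤ N → 1 ≤ y → y ≤ N → 1 ≤ w → w ≤ N →
      χ x = χ y → χ y = χ w → x + y ≠ b * w) : False := by
  have two : ∀ u v z : Fin 2, u ≠ v → z ≠ u → z = v := by decide
  have noMono : ∀ x y w : ℕ, ∀ c : Fin 2, 1 ≤ x → x ≤ N → 1 ≤ y → y ≤ N → 1 ≤ w → w ≤ N →
      x + y = b * w → χ x = c → χ y = c → χ w = c → False := by
    intro x y w c h1 h2 h3 h4 h5 h6 hs hx hy hw
    exact sol x y w h1 h2 h3 h4 h5 h6 (hx.trans hy.symm) (hy.trans hw.symm) hs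
  obtain ⟨t, ht⟩ : ∃ t, t = b/2 := ⟨_, rfl⟩
  obtain ⟨A, hA⟩ : ∃ A, A = (b+1)/2 := ⟨_, rfl⟩
  have hAt : A + t = b := by omega
  have hpar : b = 2*t ∨ b = 2*t+1 := by omega
  have ht2 : 2 ≤ t := by omega
  have htA : t ≤ A := by omega
  have hA2 : 2 ≤ A := by omega
  have hAb2 : 2*A ≤ b + 1 := by omega
  have hb1N : b + 1 ≤ N := by
    have h1 : 2*(b+1) ≤ b*(b+1) := Nat.mul_le_mul_right (b+1) (by omega)
    omega
  have hAbN : A * b ≤ N := by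
    have h1 : (2*A)*b ≤ (b+1)*b := Nat.mul_le_mul_right b hAb2
    have h2 : (2*A)*b = 2*(A*b) := by ring
    have h3 : (b+1)*b = b*(b+1) := by ring
    omega
  have hmulN : ∀ a : ℕ, a ≤ A → a * b ≤ N := fun a ha =>
    le_trans (Nat.mul_le_mul_right b ha) hAbN
  have hmul1 : ∀ a : ℕ, 1 ≤ a → 1 ≤ a * b := fun a ha =>
    le_trans (by omega) (Nat.mul_le_mul ha (by omega : 1 ≤ b))
  -- nonconstancy of a ↦ χ (a*b)
  have hex : ∃ a, 2 ≤ a ∧ a ≤ A ∧ χ (a*b) ≠ χ b := by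
    by_cases hct : χ (t*b) = χ b
    · refine ⟨A, hA2, le_rfl, fun hcA => ?_⟩
      refine noMono (A*b) (t*b) b (χ b) (hmul1 A (by omega)) (hmulN A le_rfl)
        (hmul1 t (by omega)) (hmulN t htA) (by omega) (by omega) ?_ hcA hct rfl
      rw [← add_mul, hAt]
    · exact ⟨t, ht2, htA, hct⟩
  have hspec := Nat.find_spec hex
  have hqmin : ∀ a, a < Nat.find hex → ¬(2 ≤ a ∧ a ≤ A ∧ χ (a*b) ≠ χ b) :=
    fun a h => Nat.find_min hex h
  generalize hqg : Nat.find hex = q at hspec hqmin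
  obtain ⟨hq2, hqA, hqβ⟩ := hspec
  have hmin : ∀ a, 1 ≤ a → a < q → χ (a*b) = χ b := by
    intro a ha1 haq
    rcases Nat.lt_or_ge a 2 with h | h
    · have : a = 1 := by omega
      rw [this, one_mul]
    · by_contra hne
      exact hqmin a haq ⟨h, by omega, hne⟩
  set α := χ b with hα
  set β := χ (q*b) with hβ
  have hβα : β ≠ α := hqβ
  have rβ : ∀ z : Fin 2, z ≠ β → z = α := fun z h => two β α z hβα h
  have rα : ∀ z : Fin 2, z ≠ α → z = β := fun z h => two α β z (Ne.symm hβα) h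
  -- extension: χ (c*b) = β for q ≤ c ≤ A
  have ext : ∀ c, q ≤ c → c ≤ A → χ (c*b) = β := by
    intro c
    induction c using Nat.strong_induction_on with
    | _ c IH =>
      intro hqc hcA
      rcases eq_or_lt_of_le hqc with h | hlt
      · rw [← h]
      by_contra hcne
      have hcα : χ (c*b) = α := rβ _ hcne
      rcases Nat.lt_or_ge c (2*q) with hsml | hbig
      · -- q < c < 2q : midpoint contradiction at 2q
        have ha1 : 1 ≤ 2*q - c := by omega
        have haq : 2*q - c < q := by omega
        have haα : χ ((2*q-c)*b) = α := hmin _ ha1 haq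
        have h2qα : χ (2*q) ≠ α := by
          intro h
          refine noMono ((2*q-c)*b) (c*b) (2*q) α (hmul1 (2*q-c) ha1) (hmulN (2*q-c) (by omega))
            (hmul1 c (by omega)) (hmulN c hcA) (by omega) (by omega) ?_ haα hcα h
          rw [← add_mul, show 2*q-c+c = 2*q from by omega, mul_comm]
        have h2qβ : χ (2*q) ≠ β := by
          intro h
          refine noMono (q*b) (q*b) (2*q) β (hmul1 q (by omega)) (hmulN q hqA)
            (hmul1 q (by omega)) (hmulN q hqA) (by omega) (by omega) ?_ hβ.symm hβ.symm h
          rw [← add_mul, show q+q = 2*q from by omega, mul_comm]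
        exact h2qβ (rα _ h2qα)
      · -- c ≥ 2q
        have hd : χ ((c+1-q)*b) = β := IH (c+1-q) (by omega) (by omega) (by omega)
        have hc1 : χ (c+1) ≠ β := by
          intro h
          refine noMono (q*b) ((c+1-q)*b) (c+1) β (hmul1 q (by omega)) (hmulN q hqA)
            (hmul1 (c+1-q) (by omega)) (hmulN (c+1-q) (by omega)) (by omega) (by omega) ?_ hβ.symm hd h
          rw [← add_mul, show q+(c+1-q) = c+1 from by omega, mul_comm]
        have hc1α : χ (c+1) = α := rβ _ hc1
        refine noMono b (c*b) (c+1) α (by omega) (by omega) (hmul1 c (by omega))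
          (hmulN c hcA) (by omega) (by omega) ?_ hα.symm hcα hc1α
        rw [show b + c*b = (1+c)*b from by ring, show 1+c = c+1 from by omega, mul_comm]
  -- ψ clamps
  have ψβ : ∀ s, 2 ≤ s → s ≤ 2*q - 2 → χ s = β := by
    intro s hs2 hsq
    obtain ⟨a, c, ha1, haq, hc1, hcq, hac⟩ :
        ∃ a c, 1 ≤ a ∧ a < q ∧ 1 ≤ c ∧ c < q ∧ a + c = s := by
      rcases le_or_gt s q with h | h
      · exact ⟨1, s-1, by omega, by omega, by omega, by omega, by omega⟩
      · exact ⟨s+1-q, q-1, by omega, by omega, by omega, by omega, by omega⟩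
    refine rα _ fun h => noMono (a*b) (c*b) s α (hmul1 a ha1) (hmulN a (by omega))
      (hmul1 c hc1) (hmulN c (by omega)) (by omega) (by omega) ?_
      (hmin a ha1 haq) (hmin c hc1 hcq) h
    rw [← add_mul, hac, mul_comm]
  have ψα : ∀ s, 2*q ≤ s → s ≤ 2*A → χ s = α := by
    intro s hs2 hsA
    obtain ⟨a, c, ha1, haq, hc1, hcq, hac⟩ :
        ∃ a c, q ≤ a ∧ a ≤ A ∧ q ≤ c ∧ c ≤ A ∧ a + c = s := by
      rcases le_or_gt s (q+A) with h | h
      · exact ⟨q, s-q, le_rfl, by omega, by omega, by omega, by omega⟩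
      · exact ⟨s-A, A, by omega, by omega, by omega, le_rfl, by omega⟩
    refine rβ _ fun h => noMono (a*b) (c*b) s β (hmul1 a (by omega)) (hmulN a haq)
      (hmul1 c (by omega)) (hmulN c hcq) (by omega) (by omega) ?_
      (ext a ha1 haq) (ext c hc1 hcq) h
    rw [← add_mul, hac, mul_comm]
  -- common facts
  have hχb : χ b = α := hα.symm
  have htt : t ≤ t*t := Nat.le_mul_of_pos_left t (by omega)
  rcases hpar with hbe | hbo
  · -- EVEN case : b = 2*t
    have hAe : A = t := by omega
    have hNe : N = 2*t*t + t := by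
      refine Nat.eq_of_mul_eq_mul_left (show 0 < 2 by norm_num) ?_
      rw [hN, hbe]; ring
    have htN : t ≤ N := by linarith
    have ht1N : t + 1 ≤ N := by linarith
    rcases Nat.lt_or_ge t 3 with ht3 | ht3
    · -- b = 4
      have ht2' : t = 2 := by omega
      have hb4 : b = 4 := by omega
      have hq2' : q = 2 := by omega
      have hN10 : N = 10 := by rw [hNe, ht2']
      have hχ8 : χ 8 = β := by rw [hβ, hq2', hb4]
      have hχ2 : χ 2 = β := ψβ 2 (by omega) (by omega)
      have hχ4 : χ 4 = α := by rw [← hb4]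
      have hχ6 : χ 6 = α := rβ _ (fun h => noMono 2 6 2 β (by omega) (by omega)
        (by omega) (by omega) (by omega) (by omega) (by rw [hb4]) hχ2 h hχ2)
      have hχ3 : χ 3 = β := rα _ (fun h => noMono 6 6 3 α (by omega) (by omega)
        (by omega) (by omega) (by omega) (by omega) (by rw [hb4]) hχ6 hχ6 h)
      have hχ10 : χ 10 = α := rβ _ (fun h => noMono 2 10 3 β (by omega) (by omega)
        (by omega) (by omega) (by omega) (by omega) (by rw [hb4]) hχ2 h hχ3)
      exact noMono 6 10 4 α (by omega) (by omega) (by omega) (by omega) (by omega)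
        (by omega) (by rw [hb4]) hχ6 hχ10 hχ4
    · rcases le_or_gt t (2*q-2) with hreg | hreg
      · -- E2 : q ≤ t ≤ 2q-2, t ≥ 3
        have hqt : q ≤ t := by omega
        have hχt : χ t = β := ψβ t (by omega) (by omega)
        obtain ⟨u, hu⟩ : ∃ u, t + u = 2*t*t :=
          ⟨_, Nat.add_sub_cancel' (by nlinarith)⟩
        have hu1 : 1 ≤ u := by nlinarith
        have huN : u ≤ N := by linarith
        have huα : χ u = α := rβ _ (fun h => noMono t u t β (by omega) htN hu1 huN
          (by omega) htN (by rw [hbe]; exact hu) hχt h hχt)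
        obtain ⟨d, hd⟩ : ∃ d, t + d = 2*q+1 := ⟨2*q+1-t, by omega⟩
        have hχd : χ d = β := ψβ d (by omega) (by omega)
        have h2d : 2*t*2 ≤ 2*t*d := Nat.mul_le_mul_left _ (by omega)
        have hdt1 : 2*t*d ≤ 2*t*(t+1) := Nat.mul_le_mul_left _ (by omega)
        have e0 : 2*t*(t+1) = 2*t*t + 2*t := by ring
        obtain ⟨g, hg⟩ : ∃ g, t + g = 2*t*d :=
          ⟨_, Nat.add_sub_cancel' (by linarith)⟩
        have hg1 : 1 ≤ g := by linarith
        have hgN : g ≤ N := by linarith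
        have hgα : χ g = α := rβ _ (fun h => noMono t g d β (by omega) htN hg1 hgN
          (by omega) (by omega) (by rw [hbe]; exact hg) hχt h hχd)
        have e1 : 2*t*(t+d) = 2*t*(2*q+1) := by rw [hd]
        have e2 : 2*t*(t+d) = 2*t*t + 2*t*d := by ring
        have e3 : 2*t*(2*q+1) = 2*t*(2*q) + 2*t := by ring
        exact noMono u g (2*q) α hu1 huN hg1 hgN (by omega) (by omega)
          (by rw [hbe]; linarith) huα hgα (ψα (2*q) le_rfl (by omega))
      · -- even, t ≥ 2q-1
        obtain ⟨p, hp⟩ : ∃ p, q = p+2 := ⟨q-2, by omega⟩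
        by_cases h1 : χ 1 = α
        · obtain ⟨v, hv⟩ : ∃ v, 1 + v = 2*t := ⟨2*t-1, by omega⟩
          have hvα : χ v = α := ψα v (by omega) (by omega)
          exact noMono 1 v 1 α (by omega) (by omega) (by omega) (by omega)
            (by omega) (by omega) (by rw [hbe]; omega) h1 hvα h1
        · have h1' : χ 1 = β := rα _ h1
          by_cases h2 : χ t = α
          swap
          · have h2' : χ t = β := rα _ h2
            exact noMono t t 1 β (by omega) htN (by omega) htN (by omega) (by omega)
              (by rw [hbe]; omega) h2' h2' h1'
          · have ht1α : χ (t+1) = α := ψα (t+1) (by omega) (by omega)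
            have hNβ : χ N = β := rα _ (fun h => noMono t N (t+1) α (by omega) htN
              (by omega) le_rfl (by omega) ht1N (by rw [hbe, hNe]; ring) h2 h ht1α)
            have hb1α : χ (b+1) = α := rβ _ (fun h => noMono N N (b+1) β (by omega)
              le_rfl (by omega) le_rfl (by omega) hb1N (by linarith) hNβ hNβ h)
            have hm1 : 2*t*2 ≤ 2*t*(2*p+2) := Nat.mul_le_mul_left _ (by omega)
            have hm2 : 2*t*(2*p+2) ≤ 2*t*t := Nat.mul_le_mul_left _ (by omega)
            obtain ⟨y₂, hy₂⟩ : ∃ y, 1 + y = 2*t*(2*p+2) :=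
              ⟨_, Nat.add_sub_cancel' (by linarith)⟩
            have hy₂1 : 1 ≤ y₂ := by linarith
            have hy₂N : y₂ ≤ N := by linarith
            have hy₂α : χ y₂ = α := rβ _ (fun h => noMono 1 y₂ (2*p+2) β (by omega)
              (by omega) hy₂1 hy₂N (by omega) (by omega) (by rw [hbe]; exact hy₂)
              h1' h (ψβ (2*p+2) (by omega) (by omega)))
            have e4 : 2*t*(2*p+3) = 2*t*(2*p+2) + 2*t := by ring
            have h2p3 : χ (2*p+3) = β := rα _ (fun h => noMono (b+1) y₂ (2*p+3) α
              (by omega) hb1N hy₂1 hy₂N (by omega) (by omega)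
              (by rw [hbe]; linarith) hb1α hy₂α h)
            have hm3 : 2*t*(2*p+3) ≤ 2*t*t := Nat.mul_le_mul_left _ (by omega)
            obtain ⟨y₃, hy₃⟩ : ∃ y, 1 + y = 2*t*(2*p+3) :=
              ⟨_, Nat.add_sub_cancel' (by linarith)⟩
            have hy₃1 : 1 ≤ y₃ := by linarith
            have hy₃N : y₃ ≤ N := by linarith
            have e5 : 2*t*(2*p+4) = 2*t*(2*p+3) + 2*t := by ring
            have hy₃β : χ y₃ = β := rα _ (fun h => noMono (b+1) y₃ (2*p+4) α
              (by omega) hb1N hy₃1 hy₃N (by omega) (by omega)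
              (by rw [hbe]; linarith) hb1α h (ψα (2*p+4) (by omega) (by omega)))
            exact noMono 1 y₃ (2*p+3) β (by omega) (by omega) hy₃1 hy₃N (by omega)
              (by omega) (by rw [hbe]; exact hy₃) h1' hy₃β h2p3
  · -- ODD case : b = 2*t+1
    have hAo : A = t+1 := by omega
    have hNe : N = 2*t*t + 3*t + 1 := by
      refine Nat.eq_of_mul_eq_mul_left (show 0 < 2 by norm_num) ?_
      rw [hN, hbo]; ring
    have hNmul : (2*t+1)*(t+1) = N := by rw [hNe]; ring
    by_cases hq5 : q = t+1
    · -- O5 : q = A = t+1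
      obtain ⟨v, hv⟩ : ∃ v, v + 2 = 2*t+1 := ⟨2*t-1, by omega⟩
      have hvβ : χ v = β := ψβ v (by omega) (by omega)
      have ht1β : χ (t+1) = β := ψβ (t+1) (by omega) (by omega)
      have h2β : χ 2 = β := ψβ 2 (by omega) (by omega)
      have e : (2*t+1)*(t+1) = (2*t+1)*t + (2*t+1) := by ring
      have e2 : (2*t+1)*t = 2*t*t + t := by ring
      have ht1N : t+1 ≤ N := by linarith
      have hu₁α : χ ((2*t+1)*t + 2) = α := rβ _ (fun h =>
        noMono v ((2*t+1)*t+2) (t+1) β (by omega) (by linarith) (by linarith)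
          (by linarith) (by omega) ht1N (by rw [hbo]; linarith) hvβ h ht1β)
      have hu₂α : χ ((2*t+1)*t + v) = α := rβ _ (fun h =>
        noMono 2 ((2*t+1)*t+v) (t+1) β (by omega) (by linarith) (by linarith)
          (by linarith) (by omega) ht1N (by rw [hbo]; linarith) h2β h ht1β)
      have e3 : (2*t+1)*(2*t+1) = 2*((2*t+1)*t) + 2*t + 1 := by ring
      exact noMono ((2*t+1)*t+2) ((2*t+1)*t+v) b α (by linarith) (by linarith)
        (by linarith) (by linarith) (by omega) (by omega)
        (by rw [hbo]; linarith) hu₁α hu₂α hχb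
    · have hqt : q ≤ t := by omega
      rcases le_or_gt (2*q) (t+2) with hreg | hreg
      · -- OB : t ≥ 2q-2, branch on χ 1
        obtain ⟨p, hp⟩ : ∃ p, q = p+2 := ⟨q-2, by omega⟩
        by_cases h1 : χ 1 = α
        · have hvα : χ (2*t) = α := ψα (2*t) (by omega) (by omega)
          exact noMono 1 (2*t) 1 α (by omega) (by omega) (by omega) (by omega)
            (by omega) (by omega) (by rw [hbo]; omega) h1 hvα h1
        · have h1' : χ 1 = β := rα _ h1
          have hb1α : χ (b+1) = α := by
            have h := ψα (2*t+2) (by omega) (by omega)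
            rw [show b+1 = 2*t+2 from by omega]; exact h
          have hm1 : (2*t+1)*2 ≤ (2*t+1)*(2*p+2) := Nat.mul_le_mul_left _ (by omega)
          have hm2 : (2*t+1)*(2*p+2) ≤ (2*t+1)*(t+1) := Nat.mul_le_mul_left _ (by omega)
          obtain ⟨y₂, hy₂⟩ : ∃ y, 1 + y = (2*t+1)*(2*p+2) :=
            ⟨_, Nat.add_sub_cancel' (by linarith)⟩
          have hy₂1 : 1 ≤ y₂ := by linarith
          have hy₂N : y₂ ≤ N := by linarith
          have hy₂α : χ y₂ = α := rβ _ (fun h => noMono 1 y₂ (2*p+2) β (by omega)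
            (by omega) hy₂1 hy₂N (by omega) (by omega) (by rw [hbo]; exact hy₂)
            h1' h (ψβ (2*p+2) (by omega) (by omega)))
          have e4 : (2*t+1)*(2*p+3) = (2*t+1)*(2*p+2) + (2*t+1) := by ring
          have h2p3 : χ (2*p+3) = β := rα _ (fun h => noMono (b+1) y₂ (2*p+3) α
            (by omega) hb1N hy₂1 hy₂N (by omega) (by omega)
            (by rw [hbo]; linarith) hb1α hy₂α h)
          have hm3 : (2*t+1)*(2*p+3) ≤ (2*t+1)*(t+1) := Nat.mul_le_mul_left _ (by omega)
          obtain ⟨y₃, hy₃⟩ : ∃ y, 1 + y = (2*t+1)*(2*p+3) :=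
            ⟨_, Nat.add_sub_cancel' (by linarith)⟩
          have hy₃1 : 1 ≤ y₃ := by linarith
          have hy₃N : y₃ ≤ N := by linarith
          have e5 : (2*t+1)*(2*p+4) = (2*t+1)*(2*p+3) + (2*t+1) := by ring
          have hy₃β : χ y₃ = β := rα _ (fun h => noMono (b+1) y₃ (2*p+4) α
            (by omega) hb1N hy₃1 hy₃N (by omega) (by omega)
            (by rw [hbo]; linarith) hb1α h (ψα (2*p+4) (by omega) (by omega)))
          exact noMono 1 y₃ (2*p+3) β (by omega) (by omega) hy₃1 hy₃N (by omega)
            (by omega) (by rw [hbo]; exact hy₃) h1' hy₃β h2p3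
      · -- O2 : q ≤ t ≤ 2q-3
        have hq3 : 3 ≤ q := by omega
        have htN : t ≤ N := by linarith
        have hχt : χ t = β := ψβ t (by omega) (by omega)
        have hχt1 : χ (t+1) = β := ψβ (t+1) (by omega) (by omega)
        have hu1 : 1 ≤ 2*t*t := by nlinarith
        have huN : 2*t*t ≤ N := by linarith
        have huα : χ (2*t*t) = α := rβ _ (fun h => noMono t (2*t*t) t β (by omega)
          htN hu1 huN (by omega) htN (by rw [hbo]; ring) hχt h hχt)
        obtain ⟨d, hd⟩ : ∃ d, t + d = 2*q+1 := ⟨2*q+1-t, by omega⟩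
        have hχd : χ d = β := ψβ d (by omega) (by omega)
        have hm1 : (2*t+1)*2 ≤ (2*t+1)*d := Nat.mul_le_mul_left _ (by omega)
        have hm2 : (2*t+1)*d ≤ (2*t+1)*(t+1) := Nat.mul_le_mul_left _ (by omega)
        obtain ⟨g, hg⟩ : ∃ g, (t+1) + g = (2*t+1)*d :=
          ⟨_, Nat.add_sub_cancel' (by linarith)⟩
        have hg1 : 1 ≤ g := by linarith
        have hgN : g ≤ N := by linarith
        have hgα : χ g = α := rβ _ (fun h => noMono (t+1) g d β (by omega)
          (by omega) hg1 hgN (by omega) (by omega) (by rw [hbo]; exact hg) hχt1 h hχd)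
        have e1 : (2*t+1)*(t+d) = (2*t+1)*(2*q+1) := by rw [hd]
        have e2 : (2*t+1)*(t+d) = (2*t+1)*t + (2*t+1)*d := by ring
        have e3 : (2*t+1)*(2*q+1) = (2*t+1)*(2*q) + (2*t+1) := by ring
        have e4 : (2*t+1)*t = 2*t*t + t := by ring
        exact noMono (2*t*t) g (2*q) α hu1 huN hg1 hgN (by omega) (by omega)
          (by rw [hbo]; linarith) huα hgα (ψα (2*q) le_rfl (by omega))

/-- Every 2-coloring of `{1, ..., j*(j+1)/2}` admits a monochromatic solution
to `x + y + k*z = (k+j)*w`, for `k ≥ 1` and `j ≥ 4`; hence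
`RR(x+y+kz=(k+j)w) ≤ j*(j+1)/2`. -/
theorem mono_solution_upper_bound (k j : ℕ) (hk : 1 ≤ k) (hj : 4 ≤ j) (χ : ℕ → Fin 2) :
    ∃ x y z w : ℕ, x ∈ Finset.Icc 1 (j * (j + 1) / 2) ∧ y ∈ Finset.Icc 1 (j * (j + 1) / 2) ∧ z ∈ Finset.Icc 1 (j * (j + 1) / 2) ∧ w ∈ Finset.Icc 1 (j * (j + 1) / 2) ∧
      χ x = χ y ∧ χ y = χ z ∧ χ z = χ w ∧ x + y + k * z = (k + j) * w := by
  by_contra hcon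
  push_neg at hcon
  refine rado_key j (j*(j+1)/2) (by omega) ?_ χ ?_
  · exact Nat.mul_div_cancel' (even_iff_two_dvd.mp (Nat.even_mul_succ_self j))
  · intro x y w hx1 hxN hy1 hyN hw1 hwN hxy hyw hsum
    refine hcon x y w w (Finset.mem_Icc.mpr ⟨hx1, hxN⟩) (Finset.mem_Icc.mpr ⟨hy1, hyN⟩)
      (Finset.mem_Icc.mpr ⟨hw1, hwN⟩) (Finset.mem_Icc.mpr ⟨hw1, hwN⟩) hxy hyw rfl ?_
    have h2 : (k+j)*w = k*w + j*w := by ring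
    linarith
end

section
/- Let j ≥ 4 be an integer and let k be a positive integer with k ≥ (j²−2)(j+1)/2. Then RR(x+y+kz=(k+j)w) = j(j+1)/2; that is, N = j(j+1)/2 is the least positive integer such that every 2-coloring χ : {1,…,N} → {0,1} admits positive integers x,y,z,w ≤ N with χ(x)=χ(y)=χ(z)=χ(w) and x + y + k·z = (k+j)·w. -/
/-!
For `k` this large, a solution of `x + y + k*z = (k+j)*w` with all entries below
`T = j(j+1)/2` must have `z = w`, so up to `T` the equation behaves like `x + y = j*w`
(and `z = w` turns any solution of the latter into one of the former). The Rado number of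
`x + y = j*w` is `T`: an explicit colouring of `[1, T-1]` has no monochromatic solution, while
for a colouring of `[1, T]` the solutions `1 + (j-1) = j`, `T + T = j(j+1)`,
`(T-j) + (T-j) = j(j-1)`, ... force the colours of `j-1`, `j+1`, `T`, `T-j` and then of all of
`(j/2, j)`, which is contradictory for even and for odd `j` alike.
-/

/-- The set of positive integers `N` such that every 2-coloring of `{1, ..., N}`
admits a monochromatic solution to `x + y + k*z = l*w`. -/
def radoSet (k l : ℕ) : Set ℕ :=
  {N : ℕ | 0 < N ∧ ∀ χ : ℕ → Fin 2, ∃ x y z w : ℕ,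
    x ∈ Finset.Icc 1 N ∧ y ∈ Finset.Icc 1 N ∧ z ∈ Finset.Icc 1 N ∧ w ∈ Finset.Icc 1 N ∧
    χ x = χ y ∧ χ y = χ z ∧ χ z = χ w ∧ x + y + k * z = l * w}

theorem Nat.exists_le_lt_and_not_succ {p : ℕ → Prop} {a b : ℕ} (hab : a ≤ b) (ha : p a)
    (hb : ¬p b) : ∃ n, a ≤ n ∧ n < b ∧ p n ∧ ¬p (n + 1) := by
  induction b, hab using Nat.le_induction with
  | base => exact absurd ha hb
  | succ b hab ih =>
    by_cases hpb : p b
    · exact ⟨b, hab, b.lt_succ_self, hpb, hb⟩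
    · obtain ⟨n, han, hnb, hpn, hpn'⟩ := ih hpb
      exact ⟨n, han, hnb.trans b.lt_succ_self, hpn, hpn'⟩

theorem Fin.two_eq_iff_iff_eq (a b e : Fin 2) : a = b ↔ (a = e ↔ b = e) := by
  revert a b e; decide

/-- `p` is one colour class of a 2-colouring of `ℕ`. -/
def MonoFree (p : ℕ → Prop) (j N : ℕ) : Prop :=
  ∀ ⦃x y w⦄, x ∈ Set.Icc 1 N → y ∈ Set.Icc 1 N → w ∈ Set.Icc 1 N → x + y = j * w →
    ¬((p x ↔ p y) ∧ (p y ↔ p w))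

namespace MonoFree

variable {p : ℕ → Prop} {j T : ℕ}

theorem mono {M N : ℕ} (h : MonoFree p j N) (hMN : M ≤ N) : MonoFree p j M :=
  fun _ _ _ hx hy hw => h ⟨hx.1, hx.2.trans hMN⟩ ⟨hy.1, hy.2.trans hMN⟩ ⟨hw.1, hw.2.trans hMN⟩

theorem compl (h : MonoFree p j T) : MonoFree (fun n => ¬p n) j T := by
  intro x y w hx hy hw hsum
  simpa only [not_iff_not] using h hx hy hw hsum

theorem not_apply_sub_one (h : MonoFree p j T) (hT : 2 * T = j * j + j) (hj : 4 ≤ j) (h1 : p 1) :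
    ¬p (j - 1) := by
  have := Nat.mul_le_mul_right j hj
  have := h (x := 1) (y := j - 1) (w := 1) ⟨le_rfl, by omega⟩ ⟨by omega, by omega⟩
    ⟨le_rfl, by omega⟩ (by omega)
  tauto

theorem exists_not_apply_le_half (h : MonoFree p j T) (hT : 2 * T = j * j + j) (hj : 4 ≤ j)
    (h1 : p 1) : ∃ n, 2 ≤ n ∧ 2 * n ≤ j + 1 ∧ ¬p n := by
  have := Nat.mul_le_mul_right j hj
  by_contra! hp
  exact h (x := j / 2) (y := j - j / 2) (w := 1) ⟨by omega, by omega⟩ ⟨by omega, by omega⟩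
    ⟨le_rfl, by omega⟩ (by omega)
    ⟨iff_of_true (hp _ (by omega) (by omega)) (hp _ (by omega) (by omega)),
      iff_of_true (hp _ (by omega) (by omega)) h1⟩

theorem apply_add_one (h : MonoFree p j T) (hT : 2 * T = j * j + j) (hj : 4 ≤ j) (h1 : p 1) :
    p (j + 1) := by
  obtain ⟨n, hn2, hnj, hpn⟩ := h.exists_not_apply_le_half hT hj h1
  obtain ⟨b, hb1, hbn, hpb, hpb'⟩ := Nat.exists_le_lt_and_not_succ (by omega) h1 hpn
  have hjb : j * b + j ≤ T := by nlinarith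
  have hj_le : j ≤ j * b := Nat.le_mul_of_pos_right j hb1
  have hjb_pred : ¬p (j * b - 1) := by
    have := h (x := 1) (y := j * b - 1) (w := b) ⟨le_rfl, by omega⟩ ⟨by omega, by omega⟩
      ⟨hb1, by omega⟩ (by omega)
    tauto
  have := h (x := j * b - 1) (y := j + 1) (w := b + 1) ⟨by omega, by omega⟩
    ⟨by omega, by omega⟩ ⟨by omega, by omega⟩ (by rw [mul_add_one]; omega)
  tauto

theorem not_apply_top (h : MonoFree p j T) (hT : 2 * T = j * j + j) (hj : 4 ≤ j) (h1 : p 1) :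
    ¬p T := by
  have := Nat.mul_le_mul_right j hj
  have := h (x := T) (y := T) (w := j + 1) ⟨by omega, le_rfl⟩ ⟨by omega, le_rfl⟩
    ⟨by omega, by omega⟩ (by rw [mul_add_one]; omega)
  have := h.apply_add_one hT hj h1
  tauto

theorem apply_top_sub (h : MonoFree p j T) (hT : 2 * T = j * j + j) (hj : 4 ≤ j) (h1 : p 1) :
    p (T - j) := by
  have := Nat.mul_le_mul_right j hj
  have := h (x := T - j) (y := T - j) (w := j - 1) ⟨by omega, by omega⟩ ⟨by omega, by omega⟩
    ⟨by omega, by omega⟩ (by rw [Nat.mul_sub_one]; omega)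
  have := h.not_apply_sub_one hT hj h1
  tauto

theorem not_apply_of_not_succ (h : MonoFree p j T) (hT : 2 * T = j * j + j) (hj : 4 ≤ j) (h1 : p 1)
    {v : ℕ} (hv : j / 2 < v) (hvj : v + 1 < j) (hpv : ¬p (v + 1)) : ¬p v := by
  have : j * j + j ≤ 2 * (j * v) := by nlinarith [Nat.lt_mul_div_succ j two_pos]
  have : j * v ≤ j * j := Nat.mul_le_mul_left j (by omega)
  have := Nat.mul_le_mul_right j hj
  have hy : p (j * v + j - T) := by
    have := h (x := T) (y := j * v + j - T) (w := v + 1) ⟨by omega, le_rfl⟩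
      ⟨by omega, by omega⟩ ⟨by omega, by omega⟩ (by rw [mul_add_one]; omega)
    have := h.not_apply_top hT hj h1
    tauto
  have := h (x := T - j) (y := j * v + j - T) (w := v) ⟨by omega, by omega⟩
    ⟨by omega, by omega⟩ ⟨by omega, by omega⟩ (by omega)
  have := h.apply_top_sub hT hj h1
  tauto

theorem not_apply_of_half_lt (h : MonoFree p j T) (hT : 2 * T = j * j + j) (hj : 4 ≤ j) (h1 : p 1)
    {v : ℕ} (hv : j / 2 < v) (hvj : v < j) : ¬p v := by
  refine Nat.decreasingInduction' (P := fun v => ¬p v) (fun k hkj hvk ih => ?_)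
    (show v ≤ j - 1 by omega) (h.not_apply_sub_one hT hj h1)
  exact h.not_apply_of_not_succ hT hj h1 (by omega) (by omega) ih

theorem false_of_even (h : MonoFree p j T) (hT : 2 * T = j * j + j) (hj : 4 ≤ j) (h1 : p 1)
    {u : ℕ} (hu : j = 2 * u) : False := by
  have hjj : j * j = 2 * (j * u) := by rw [hu]; ring
  have hju := Nat.mul_le_mul_left j (show 2 ≤ u by omega)
  have hnu : ¬p u := by
    have := h (x := T - j) (y := u) (w := u) ⟨by omega, by omega⟩ ⟨by omega, by omega⟩
      ⟨by omega, by omega⟩ (by omega)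
    have := h.apply_top_sub hT hj h1
    tauto
  have := h (x := T) (y := u) (w := u + 1) ⟨by omega, le_rfl⟩ ⟨by omega, by omega⟩
    ⟨by omega, by omega⟩ (by rw [mul_add_one]; omega)
  have := h.not_apply_top hT hj h1
  have := h.not_apply_of_half_lt hT hj h1 (v := u + 1) (by omega) (by omega)
  tauto

theorem false_of_odd (h : MonoFree p j T) (hT : 2 * T = j * j + j) (hj : 4 ≤ j) (h1 : p 1)
    {u : ℕ} (hu : j = 2 * u + 1) : False := by
  have hjj : j * j = 2 * (j * u) + j := by rw [hu]; ring
  have hju := Nat.mul_le_mul_left j (show 2 ≤ u by omega)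
  have hnT := h.not_apply_top hT hj h1
  have hnu1 := h.not_apply_of_half_lt hT hj h1 (v := u + 1) (by omega) (by omega)
  have hpj : p j := by
    have := h (x := T) (y := j) (w := u + 2) ⟨by omega, le_rfl⟩ ⟨by omega, by omega⟩
      ⟨by omega, by omega⟩ (by rw [mul_add]; omega)
    have := h.not_apply_of_half_lt hT hj h1 (v := u + 2) (by omega) (by omega)
    tauto
  have hn2 : ¬p 2 := by
    have := h (x := j) (y := j) (w := 2) ⟨by omega, by omega⟩ ⟨by omega, by omega⟩
      ⟨by omega, by omega⟩ (by omega)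
    tauto
  have hpT2 : p (T - 2) := by
    have := h (x := 2) (y := T - 2) (w := u + 1) ⟨by omega, by omega⟩ ⟨by omega, by omega⟩
      ⟨by omega, by omega⟩ (by rw [mul_add_one]; omega)
    tauto
  have hpTj : p (T - j + 2) := by
    have := h (x := j - 2) (y := T - j + 2) (w := u + 1) ⟨by omega, by omega⟩
      ⟨by omega, by omega⟩ ⟨by omega, by omega⟩ (by rw [mul_add_one]; omega)
    have := h.not_apply_of_half_lt hT hj h1 (v := j - 2) (by omega) (by omega)
    tauto
  exact h (x := T - 2) (y := T - j + 2) (w := j) ⟨by omega, by omega⟩ ⟨by omega, by omega⟩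
    ⟨by omega, by omega⟩ (by omega) ⟨iff_of_true hpT2 hpTj, iff_of_true hpTj hpj⟩

theorem not_apply_one (h : MonoFree p j T) (hT : 2 * T = j * j + j) (hj : 4 ≤ j) : ¬p 1 := by
  intro h1
  obtain ⟨u, hu | hu⟩ := Nat.even_or_odd' j
  · exact h.false_of_even hT hj h1 hu
  · exact h.false_of_odd hT hj h1 hu

end MonoFree

theorem not_monoFree {j T : ℕ} (hT : 2 * T = j * j + j) (hj : 4 ≤ j) (p : ℕ → Prop) :
    ¬MonoFree p j T :=
  fun h => h.compl.not_apply_one hT hj (h.not_apply_one hT hj)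

/-- The colour class of the extremal colouring of `[1, j(j+1)/2 - 1]`; `j = 4` needs its own. -/
def lowerClass (j n : ℕ) : Prop :=
  if j = 4 then n = 2 ∨ n = 3 ∨ n = 7 ∨ n = 8
  else 3 ≤ n ∧ n ≤ j ∨ 2 * j - 2 ≤ n ∧ n ≤ 2 * j - 1

theorem monoFree_lowerClass {j T : ℕ} (hT : 2 * T = j * j + j) (hj : 4 ≤ j) :
    MonoFree (lowerClass j) j (T - 1) := by
  rintro x y w ⟨hx1, hx⟩ ⟨hy1, hy⟩ ⟨hw1, -⟩ hsum
  have hwj : w ≤ j := by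
    by_contra! hw
    have : j * (j + 1) ≤ j * w := Nat.mul_le_mul_left j hw
    rw [mul_add_one] at this
    omega
  unfold lowerClass
  split_ifs with hj4
  · subst hj4
    interval_cases w <;> omega
  · rcases (show w ≤ 2 ∨ w = 3 ∨ 4 ≤ w by omega) with hw | rfl | hw
    · interval_cases w <;> omega
    · omega
    · have := Nat.mul_le_mul_left j hw
      omega

theorem eq_of_add_add_mul_eq_add_mul {k j N x y z w : ℕ} (hj : 2 ≤ j) (hjN : j * N < k + 2)
    (hx : x ∈ Set.Icc 1 N) (hy : y ∈ Set.Icc 1 N) (hw : w ≤ N)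
    (h : x + y + k * z = (k + j) * w) : z = w := by
  obtain ⟨hx1, hxN⟩ := hx
  obtain ⟨hy1, hyN⟩ := hy
  rw [add_mul] at h
  have hjw : j * w ≤ j * N := Nat.mul_le_mul_left j hw
  rcases lt_trichotomy z w with hzw | rfl | hzw
  · have : k * (z + 1) ≤ k * w := Nat.mul_le_mul_left k hzw
    have := Nat.mul_le_mul_right N hj
    have := Nat.le_mul_of_pos_right j (show 0 < w by omega)
    rw [mul_add_one] at *
    omega
  · rfl
  · have : k * (w + 1) ≤ k * z := Nat.mul_le_mul_left k hzw
    rw [mul_add_one] at *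
    omega

theorem mem_radoSet_of_forall_not_monoFree {k j N : ℕ} (hN : 0 < N)
    (h : ∀ p, ¬MonoFree p j N) : N ∈ radoSet k (k + j) := by
  refine ⟨hN, fun χ => by_contra fun hχ => h (χ · = χ 1) ?_⟩
  rintro x y w hx hy hw hsum ⟨hxy, hyw⟩
  apply hχ
  exact ⟨x, y, w, w, Finset.mem_Icc.2 hx, Finset.mem_Icc.2 hy, Finset.mem_Icc.2 hw,
    Finset.mem_Icc.2 hw, (Fin.two_eq_iff_iff_eq _ _ _).2 hxy, (Fin.two_eq_iff_iff_eq _ _ _).2 hyw,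
    rfl, by rw [hsum, add_mul, add_comm (k * w)]⟩

theorem not_mem_radoSet_of_monoFree {k j N : ℕ} {p : ℕ → Prop} (hj : 2 ≤ j)
    (hjN : j * N < k + 2) (h : MonoFree p j N) : N ∉ radoSet k (k + j) := by
  classical
  rintro ⟨-, hN⟩
  set χ : ℕ → Fin 2 := fun n => if p n then 1 else 0
  have hχ : ∀ a b, χ a = χ b ↔ (p a ↔ p b) := by
    intro a b
    simp only [χ]
    split_ifs <;> simp_all
  obtain ⟨x, y, z, w, hx, hy, hz, hw, hxy, hyz, hzw, hsum⟩ := hN χ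
  simp only [Finset.mem_Icc] at hx hy hz hw
  obtain rfl := eq_of_add_add_mul_eq_add_mul hj hjN hx hy hw.2 hsum
  exact h hx hy hw (by rw [add_mul] at hsum; omega) ⟨(hχ x y).1 hxy, (hχ y z).1 hyz⟩

theorem mul_sub_one_lt_add_two {k j T : ℕ} (hj : 2 ≤ j) (hT : 2 * T = j * j + j)
    (hk : (j ^ 2 - 2) * (j + 1) / 2 ≤ k) : j * (T - 1) < k + 2 := by
  have hj2 : 2 ≤ j ^ 2 := by nlinarith
  have hT1 : 1 ≤ T := by nlinarith
  have hTz : (2 * T : ℤ) = j * j + j := by exact_mod_cast hT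
  have : (j ^ 2 - 2) * (j + 1) + 2 = 2 * (j * (T - 1)) := by
    zify [hj2, hT1]
    linear_combination -(j : ℤ) * hTz
  omega

theorem RR_eq_of_large_k_general (k j : ℕ) (hj : 4 ≤ j)
    (hkb : (j ^ 2 - 2) * (j + 1) / 2 ≤ k) :
    IsLeast (radoSet k (k + j)) (j * (j + 1) / 2) := by
  have hT : 2 * (j * (j + 1) / 2) = j * j + j := by
    rw [Nat.mul_div_cancel' (Nat.even_mul_succ_self j).two_dvd, mul_add_one]
  refine ⟨mem_radoSet_of_forall_not_monoFree (by omega) (not_monoFree hT hj), fun N hN => ?_⟩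
  by_contra! hNT
  have hjN : j * N < k + 2 :=
    (Nat.mul_le_mul_left j (by omega)).trans_lt (mul_sub_one_lt_add_two (by omega) hT hkb)
  exact not_mem_radoSet_of_monoFree (by omega) hjN
    ((monoFree_lowerClass hT hj).mono (by omega)) hN

/-- For `j ≥ 4` and `k ≥ (j²-2)(j+1)/2`, the Rado number of
`x + y + k*z = (k+j)*w` equals `j*(j+1)/2`. -/
theorem RR_eq_of_large_k (k j : ℕ) (hk : 0 < k) (hj : 4 ≤ j)
    (hkb : (j ^ 2 - 2) * (j + 1) / 2 ≤ k) :
    IsLeast (radoSet k (k + j)) (j * (j + 1) / 2) :=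
  RR_eq_of_large_k_general k j hj hkb
end

section
/- Let j ≥ 4 be an integer and let k be a positive integer with k ≥ (j²−2)(j+1)/2. If x, y, z, w are positive integers all strictly less than j(j+1)/2 satisfying x + y + k·z = (k+j)·w, then z = w (and consequently x + y = j·w). -/
/-!
Rewrite the equation as `(x + y) + k z = j w + k w`. Two representations `a + k z = b + k w`
with `|a - b| < k` must have `z = w`, and the bound on `k` is exactly what makes
`|x + y - j w| < k`: on one side `x + y < j (j + 1) ≤ k`, on the other
`j w ≤ j (j (j + 1) / 2 - 1) = k₀ + 1 < x + y + k₀` for `k₀ = (j² - 2)(j + 1) / 2`.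
-/

theorem Nat.eq_of_add_mul_eq_add_mul {a b k z w : ℕ} (h : a + k * z = b + k * w)
    (hab : a < b + k) (hba : b < a + k) : z = w := by
  rcases lt_trichotomy z w with hzw | hzw | hzw
  · have := Nat.mul_le_mul_left k (Nat.succ_le_of_lt hzw)
    rw [Nat.mul_succ] at this
    omega
  · exact hzw
  · have := Nat.mul_le_mul_left k (Nat.succ_le_of_lt hzw)
    rw [Nat.mul_succ] at this
    omega

theorem Nat.sq_sub_two_mul_succ_div_two_add_succ {j : ℕ} (hj : 2 ≤ j) :
    (j ^ 2 - 2) * (j + 1) / 2 + (j + 1) = j * (j * (j + 1) / 2) := by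
  obtain ⟨m, hm⟩ := (Nat.even_mul_succ_self j).two_dvd
  have hsq : 2 ≤ j ^ 2 := le_trans hj (Nat.le_self_pow two_ne_zero j)
  have hexpand : (j ^ 2 - 2) * (j + 1) + 2 * (j + 1) = 2 * (j * m) := by
    rw [← Nat.add_mul, Nat.sub_add_cancel hsq, Nat.mul_left_comm, ← hm]
    ring
  rw [hm, Nat.mul_div_cancel_left _ two_pos]
  omega

theorem Nat.mul_succ_le_sq_sub_two_mul_succ_div_two {j : ℕ} (hj : 3 ≤ j) :
    j * (j + 1) ≤ (j ^ 2 - 2) * (j + 1) / 2 := by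
  have hid := Nat.sq_sub_two_mul_succ_div_two_add_succ (le_of_succ_le hj)
  have hmul := Nat.mul_le_mul_right (j * (j + 1) / 2) hj
  have hprod := Nat.mul_le_mul_right (j + 1) hj
  omega

theorem z_eq_w_of_small_solution_general (k j x y z w : ℕ) (hj : 4 ≤ j)
    (hkb : (j ^ 2 - 2) * (j + 1) / 2 ≤ k)
    (hx : 0 < x) (hy : 0 < y)
    (hx' : x < j * (j + 1) / 2) (hy' : y < j * (j + 1) / 2)
    (hw' : w < j * (j + 1) / 2)
    (heq : x + y + k * z = (k + j) * w) :
    z = w ∧ x + y = j * w := by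
  have hid := Nat.sq_sub_two_mul_succ_div_two_add_succ (by omega : 2 ≤ j)
  have hsum_lt := Nat.mul_succ_le_sq_sub_two_mul_succ_div_two (by omega : 3 ≤ j)
  have hjw : j * (w + 1) ≤ j * (j * (j + 1) / 2) := Nat.mul_le_mul_left j hw'
  rw [Nat.mul_succ] at hjw
  have heq' : x + y + k * z = j * w + k * w := by rw [heq]; ring
  have hzw : z = w := Nat.eq_of_add_mul_eq_add_mul heq' (by omega) (by omega)
  subst hzw
  exact ⟨rfl, by omega⟩

/-- For `j ≥ 4` and `k ≥ (j²-2)(j+1)/2`, any solution to `x + y + k*z = (k+j)*w`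
in positive integers all strictly below `j*(j+1)/2` must have `z = w`,
and consequently `x + y = j * w`. -/
theorem z_eq_w_of_small_solution (k j x y z w : ℕ) (hj : 4 ≤ j) (hk : 0 < k)
    (hkb : (j ^ 2 - 2) * (j + 1) / 2 ≤ k)
    (hx : 0 < x) (hy : 0 < y) (hz : 0 < z) (hw : 0 < w)
    (hx' : x < j * (j + 1) / 2) (hy' : y < j * (j + 1) / 2)
    (hz' : z < j * (j + 1) / 2) (hw' : w < j * (j + 1) / 2)
    (heq : x + y + k * z = (k + j) * w) :
    z = w ∧ x + y = j * w :=
  z_eq_w_of_small_solution_general k j x y z w hj hkb hx hy hx' hy' hw' heq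
end

section
/- For every integer k ≥ 2, RR(x+y+2kz=2kw) = 2k; that is, N = 2k is the least positive integer such that every 2-coloring χ : {1,…,N} → {0,1} admits positive integers x,y,z,w ≤ N with χ(x)=χ(y)=χ(z)=χ(w) and x + y + 2k·z = 2k·w. -/
def Monochromatic (χ : ℕ → Fin 2) (x y z w : ℕ) : Prop :=
  χ x = χ y ∧ χ y = χ z ∧ χ z = χ w

-- The seven quadruples of the proof idea above, written with `m = k - 1`.
theorem monochromatic_quadruple_cases (χ : ℕ → Fin 2) (m : ℕ) :
    Monochromatic χ (m + 1) (m + 1) (m + 1) (m + 2) ∨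
    Monochromatic χ (m + 1) (m + 1) m (m + 1) ∨
    Monochromatic χ m (m + 2) (m + 2) (m + 3) ∨
    Monochromatic χ (2 * m + 2) (2 * m + 2) (m + 1) (m + 3) ∨
    Monochromatic χ m (m + 2) (2 * m + 1) (2 * m + 2) ∨
    Monochromatic χ (m + 1) (m + 1) (2 * m) (2 * m + 1) ∨
    Monochromatic χ (2 * m + 2) (2 * m + 2) (2 * m) (2 * m + 2) := by
  unfold Monochromatic
  generalize χ m = a, χ (m + 1) = b, χ (m + 2) = c, χ (m + 3) = d, χ (2 * m) = e,
    χ (2 * m + 1) = f, χ (2 * m + 2) = g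
  omega

section

variable {k : ℕ}

theorem four_mul_le_add_of_mod_two_eq {x y z w : ℕ} (hx : 0 < x) (hzw : z % 2 = w % 2)
    (h : x + y + 2 * k * z = 2 * k * w) : 4 * k ≤ x + y := by
  have hzw_lt : z < w := Nat.lt_of_mul_lt_mul_left (a := 2 * k) (by omega)
  have hw : z + 2 ≤ w := by omega
  nlinarith [Nat.mul_le_mul_left (2 * k) hw]

theorem notMem_radoSet_of_lt {N : ℕ} (hN : N < 2 * k) : N ∉ radoSet (2 * k) (2 * k) := by
  rintro ⟨-, hχ⟩
  obtain ⟨x, y, z, w, hx, hy, -, -, -, -, hzw, h⟩ := hχ fun n => ⟨n % 2, Nat.mod_lt _ two_pos⟩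
  rw [Finset.mem_Icc] at hx hy
  have := four_mul_le_add_of_mod_two_eq hx.1 (Fin.mk.inj hzw) h
  omega

theorem two_mul_mem_radoSet (hk : 2 ≤ k) : 2 * k ∈ radoSet (2 * k) (2 * k) := by
  obtain ⟨m, rfl⟩ : ∃ m, k = m + 1 := ⟨k - 1, by omega⟩
  refine ⟨by omega, fun χ => ?_⟩
  suffices ∃ x y z w, Monochromatic χ x y z w ∧ m ≤ min (min x y) (min z w) ∧
      max (max x y) (max z w) ≤ 2 * m + 2 ∧ x + y + 2 * (m + 1) * z = 2 * (m + 1) * w by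
    obtain ⟨x, y, z, w, ⟨hxy, hyz, hzw⟩, hlow, hhigh, h⟩ := this
    simp only [Finset.mem_Icc]
    exact ⟨x, y, z, w, by omega, by omega, by omega, by omega, hxy, hyz, hzw, h⟩
  rcases monochromatic_quadruple_cases χ m with h | h | h | h | h | h | h <;>
    exact ⟨_, _, _, _, h, by omega, by omega, by ring⟩

end

/-- For `k ≥ 2`, `RR(x + y + 2k*z = 2k*w) = 2k`. -/
theorem RR_two_k (k : ℕ) (hk : 2 ≤ k) :
    IsLeast (radoSet (2 * k) (2 * k)) (2 * k) :=
  ⟨two_mul_mem_radoSet hk, fun _ hN => not_lt.mp fun hlt => notMem_radoSet_of_lt hlt hN⟩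
end

section
/- RR(x+y+z=w) = 11; that is, every 2-coloring χ : {1,…,11} → {0,1} admits positive integers x,y,z,w ≤ 11 with χ(x)=χ(y)=χ(z)=χ(w) and x + y + z = w, while there exists a 2-coloring of {1,…,10} admitting no such monochromatic solution. -/
/-!
Upper bound: if `χ` has no monochromatic solution in `{1, …, 11}`, the solutions
`1+1+1 = 3`, `3+3+3 = 9`, `1+1+9 = 11`, `3+3+5 = 11`, `1+1+5 = 7` force the colours
`χ 1 = χ 5 = χ 9 ≠ χ 3 = χ 7 = χ 11`, and then `1+2+2 = 5` or `2+2+3 = 7` is monochromatic,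
whichever colour `2` gets.

Lower bound: colour `{3, …, 8}` differently from `{1, 2, 9, 10}`. Three elements of
`{3, …, 8}` sum to at least `9`, and three elements of `{1, 2, 9, 10}` with sum at most `10`
all lie in `{1, 2}`, so their sum lies in `{3, …, 6}`.
-/

open Finset

def HasMonoSolution (χ : ℕ → Fin 2) (N : ℕ) : Prop :=
  ∃ x y z w : ℕ, x ∈ Icc 1 N ∧ y ∈ Icc 1 N ∧ z ∈ Icc 1 N ∧ w ∈ Icc 1 N ∧
    χ x = χ y ∧ χ y = χ z ∧ χ z = χ w ∧ x + y + z = w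

lemma Fin.two_eq_of_ne_of_ne {a b c : Fin 2} (hac : a ≠ c) (hbc : b ≠ c) : a = b := by
  omega

lemma ne_of_not_hasMonoSolution {χ : ℕ → Fin 2} {N : ℕ} (hχ : ¬ HasMonoSolution χ N)
    (a b c w : ℕ) (hsol : 1 ≤ a ∧ 1 ≤ b ∧ 1 ≤ c ∧ a + b + c = w ∧ w ≤ N)
    (hab : χ a = χ b) (hbc : χ b = χ c) : χ c ≠ χ w := fun hcw =>
  hχ ⟨a, b, c, w, mem_Icc.2 ⟨by omega, by omega⟩, mem_Icc.2 ⟨by omega, by omega⟩,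
    mem_Icc.2 ⟨by omega, by omega⟩, mem_Icc.2 ⟨by omega, by omega⟩, hab, hbc, hcw, hsol.2.2.2.1⟩

theorem hasMonoSolution_eleven (χ : ℕ → Fin 2) : HasMonoSolution χ 11 := by
  by_contra hχ
  have free := ne_of_not_hasMonoSolution hχ
  have h3 : χ 1 ≠ χ 3 := free 1 1 1 3 (by norm_num) rfl rfl
  have h9 : χ 9 = χ 1 :=
    Fin.two_eq_of_ne_of_ne (free 3 3 3 9 (by norm_num) rfl rfl).symm h3
  have h11 : χ 11 = χ 3 :=
    Fin.two_eq_of_ne_of_ne (free 9 1 1 11 (by norm_num) h9 rfl).symm h3.symm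
  have h5 : χ 5 = χ 1 := by
    by_contra h51
    have h53 : χ 5 = χ 3 := Fin.two_eq_of_ne_of_ne h51 h3.symm
    exact free 3 3 5 11 (by norm_num) rfl h53.symm (h53.trans h11.symm)
  have h7 : χ 7 = χ 3 :=
    Fin.two_eq_of_ne_of_ne (free 5 1 1 7 (by norm_num) h5 rfl).symm h3.symm
  by_cases h2 : χ 2 = χ 1
  · exact free 1 2 2 5 (by norm_num) h2.symm rfl (h2.trans h5.symm)
  · have h23 : χ 2 = χ 3 := Fin.two_eq_of_ne_of_ne h2 h3.symm
    exact free 2 2 3 7 (by norm_num) rfl h23 h7.symm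

def middleColoring (n : ℕ) : Fin 2 := if 3 ≤ n ∧ n ≤ 8 then 1 else 0

theorem not_hasMonoSolution_middleColoring_ten : ¬ HasMonoSolution middleColoring 10 := by
  rintro ⟨x, y, z, w, hx, hy, hz, hw, hxy, hyz, hzw, rfl⟩
  simp only [mem_Icc] at hx hy hz hw
  unfold middleColoring at hxy hyz hzw
  split_ifs at hxy hyz hzw <;> omega

/-- `RR(x + y + z = w) = 11`: every 2-coloring of `{1, ..., 11}` admits a
monochromatic solution to `x + y + z = w`, while some 2-coloring of
`{1, ..., 10}` admits none. -/
theorem RR_x_add_y_add_z_eq_w :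
    (∀ χ : ℕ → Fin 2, ∃ x y z w : ℕ, x ∈ Finset.Icc 1 (11) ∧ y ∈ Finset.Icc 1 (11) ∧ z ∈ Finset.Icc 1 (11) ∧ w ∈ Finset.Icc 1 (11) ∧
      χ x = χ y ∧ χ y = χ z ∧ χ z = χ w ∧ x + y + z = w) ∧
    (∃ χ : ℕ → Fin 2, ¬ ∃ x y z w : ℕ, x ∈ Finset.Icc 1 (10) ∧ y ∈ Finset.Icc 1 (10) ∧ z ∈ Finset.Icc 1 (10) ∧ w ∈ Finset.Icc 1 (10) ∧
      χ x = χ y ∧ χ y = χ z ∧ χ z = χ w ∧ x + y + z = w) :=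
  ⟨hasMonoSolution_eleven, middleColoring, not_hasMonoSolution_middleColoring_ten⟩
end

section
/- Let k ≥ 2 be an integer and let χ : {1,…,2k−1} → {0,1} be the 2-coloring with χ(i) = 0 if i is odd and χ(i) = 1 if i is even. Then there are no x, y, z, w ∈ {1,…,2k−1} with χ(x)=χ(y)=χ(z)=χ(w) and x + y + 2k·z = 2k·w. -/
/-! Since `0 < x + y < 4k`, the equation `x + y = 2k (w - z)` forces `w = z + 1`,
so `z` and `w` have different parities and hence different colors. -/

theorem Nat.eq_add_one_of_add_mul_eq_mul {a m z w : ℕ} (ha₀ : 0 < a) (ha : a < 2 * m)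
    (h : a + m * z = m * w) : w = z + 1 := by
  have hz : z < w := Nat.lt_of_mul_lt_mul_left (a := m) (by omega)
  have hw : w < z + 2 := Nat.lt_of_mul_lt_mul_left (a := m) (by rw [mul_add]; omega)
  omega

theorem parity_color_add_one_ne (n : ℕ) :
    (if Odd (n + 1) then (0 : Fin 2) else 1) ≠ if Odd n then 0 else 1 := by
  rcases Nat.even_or_odd n with hn | hn
  · simp [hn.add_one, Nat.not_odd_iff_even.mpr hn]
  · simp [hn, Nat.not_odd_iff_even.mpr hn.add_one]

theorem no_mono_solution_parity_coloring_general (k : ℕ) (χ : ℕ → Fin 2)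
    (hχ : ∀ i, 1 ≤ i → i ≤ 2 * k - 1 → χ i = if Odd i then 0 else 1) :
    ¬ ∃ x y z w : ℕ, x ∈ Finset.Icc 1 (2 * k - 1) ∧ y ∈ Finset.Icc 1 (2 * k - 1) ∧ z ∈ Finset.Icc 1 (2 * k - 1) ∧ w ∈ Finset.Icc 1 (2 * k - 1) ∧
      χ x = χ y ∧ χ y = χ z ∧ χ z = χ w ∧ x + y + 2 * k * z = 2 * k * w := by
  rintro ⟨x, y, z, w, hx, hy, hz, hw, -, -, hzw, heq⟩
  simp only [Finset.mem_Icc] at hx hy hz hw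
  have hwz : w = z + 1 :=
    Nat.eq_add_one_of_add_mul_eq_mul (a := x + y) (m := 2 * k) (by omega) (by omega) heq
  rw [hχ z hz.1 hz.2, hχ w hw.1 hw.2, hwz] at hzw
  exact parity_color_add_one_ne z hzw.symm

/-- The parity coloring of `{1, ..., 2k-1}` (odd integers get color 0, even
integers color 1) admits no monochromatic solution to `x + y + 2k*z = 2k*w`. -/
theorem no_mono_solution_parity_coloring (k : ℕ) (hk : 2 ≤ k) (χ : ℕ → Fin 2)
    (hχ : ∀ i, 1 ≤ i → i ≤ 2 * k - 1 → χ i = if Odd i then 0 else 1) :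
    ¬ ∃ x y z w : ℕ, x ∈ Finset.Icc 1 (2 * k - 1) ∧ y ∈ Finset.Icc 1 (2 * k - 1) ∧ z ∈ Finset.Icc 1 (2 * k - 1) ∧ w ∈ Finset.Icc 1 (2 * k - 1) ∧
      χ x = χ y ∧ χ y = χ z ∧ χ z = χ w ∧ x + y + 2 * k * z = 2 * k * w :=
  no_mono_solution_parity_coloring_general k χ hχ
end

section
/- For every positive integer k, RR(x+y+kz=(k+3)w) equals: 4 if k ∈ {1,2,3,4,5,7}; 6 if k ∈ {8,11}; and 9 if k ∈ {6,9,10} or k ≥ 12. Here the value N = RR(x+y+kz=(k+3)w) is the least positive integer such that every 2-coloring χ : {1,…,N} → {0,1} admits positive integers x,y,z,w ≤ N with χ(x)=χ(y)=χ(z)=χ(w) and x + y + k·z = (k+3)·w. -/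
set_option maxRecDepth 100000
set_option maxHeartbeats 2000000

/-- Auxiliary coloring avoiding monochromatic solutions on small intervals. -/
def badCol : ℕ → Fin 2 := fun n => if n = 2 ∨ n = 5 ∨ n = 6 ∨ n = 8 then 1 else 0

lemma mem_rado_of_finCheck (k l N : ℕ) (hN : 0 < N)
    (h : ∀ c : Fin N → Fin 2, ∃ x y z w : Fin N,
      c x = c y ∧ c y = c z ∧ c z = c w ∧
      (x.1 + 1) + (y.1 + 1) + k * (z.1 + 1) = l * (w.1 + 1)) :
    N ∈ radoSet k l := by
  refine ⟨hN, fun χ => ?_⟩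
  obtain ⟨x, y, z, w, h1, h2, h3, h4⟩ := h (fun i => χ (i.1 + 1))
  refine ⟨x.1 + 1, y.1 + 1, z.1 + 1, w.1 + 1, ?_, ?_, ?_, ?_, h1, h2, h3, h4⟩ <;>
    simp only [Finset.mem_Icc] <;> omega

lemma lb_rado (k l B : ℕ) (c : ℕ → Fin 2)
    (h : ∀ x y z w : Fin B,
      c (x.1 + 1) = c (y.1 + 1) → c (y.1 + 1) = c (z.1 + 1) → c (z.1 + 1) = c (w.1 + 1) →
      (x.1 + 1) + (y.1 + 1) + k * (z.1 + 1) ≠ l * (w.1 + 1)) :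
    ∀ N ∈ radoSet k l, B < N := by
  intro N hN
  by_contra hle
  push_neg at hle
  obtain ⟨hpos, hall⟩ := hN
  obtain ⟨x, y, z, w, hx, hy, hz, hw, e1, e2, e3, e4⟩ := hall c
  simp only [Finset.mem_Icc] at hx hy hz hw
  have := h ⟨x - 1, by omega⟩ ⟨y - 1, by omega⟩ ⟨z - 1, by omega⟩ ⟨w - 1, by omega⟩
  simp only [Nat.sub_add_cancel hx.1, Nat.sub_add_cancel hy.1, Nat.sub_add_cancel hz.1,
    Nat.sub_add_cancel hw.1] at this
  exact this e1 e2 e3 e4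

/-- Every 2-coloring of `[1,9]` admits a monochromatic solution to `x + y = 3z`. -/
lemma schur9 : ∀ c : Fin 9 → Fin 2, ∃ x y z : Fin 9,
    c x = c y ∧ c y = c z ∧ (x.1 + 1) + (y.1 + 1) = 3 * (z.1 + 1) := by decide

/-- `badCol` avoids monochromatic `x + y = 3z` on `[1,8]`. -/
lemma noschur8 : ∀ x y z : Fin 8,
    badCol (x.1 + 1) = badCol (y.1 + 1) → badCol (y.1 + 1) = badCol (z.1 + 1) →
    (x.1 + 1) + (y.1 + 1) ≠ 3 * (z.1 + 1) := by decide

lemma mem9 (k : ℕ) : (9 : ℕ) ∈ radoSet k (k + 3) := by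
  refine mem_rado_of_finCheck k (k + 3) 9 (by norm_num) (fun c => ?_)
  obtain ⟨x, y, z, h1, h2, h3⟩ := schur9 c
  refine ⟨x, y, z, z, h1, h2, rfl, ?_⟩
  have : (k + 3) * (z.1 + 1) = k * (z.1 + 1) + 3 * (z.1 + 1) := by ring
  omega

lemma lb9_large (k : ℕ) (hk : 26 ≤ k) : ∀ N ∈ radoSet k (k + 3), 8 < N := by
  refine lb_rado k (k + 3) 8 badCol ?_
  intro x y z w e1 e2 e3 e4
  have hxB : x.1 < 8 := x.isLt
  have hyB : y.1 < 8 := y.isLt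
  have hzB : z.1 < 8 := z.isLt
  have hwB : w.1 < 8 := w.isLt
  have hexp : (k + 3) * (w.1 + 1) = k * (w.1 + 1) + 3 * (w.1 + 1) := by ring
  rcases lt_trichotomy z.1 w.1 with h | h | h
  · have hle : k * (z.1 + 1) + k ≤ k * (w.1 + 1) := by
      calc k * (z.1 + 1) + k = k * (z.1 + 1 + 1) := by ring
        _ ≤ k * (w.1 + 1) := Nat.mul_le_mul_left k (by omega)
    omega
  · obtain rfl : z = w := Fin.ext h
    have hxy : (x.1 + 1) + (y.1 + 1) = 3 * (z.1 + 1) := by omega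
    exact noschur8 x y z e1 e2 hxy
  · have hle : k * (w.1 + 1) + k ≤ k * (z.1 + 1) := by
      calc k * (w.1 + 1) + k = k * (w.1 + 1 + 1) := by ring
        _ ≤ k * (z.1 + 1) := Nat.mul_le_mul_left k (by omega)
    omega

/-- The values of `RR(x + y + k*z = (k+3)*w)` for every positive integer `k`. -/
theorem RR_k_add_three (k : ℕ) (hk : 0 < k) :
    ((k = 1 ∨ k = 2 ∨ k = 3 ∨ k = 4 ∨ k = 5 ∨ k = 7) → IsLeast (radoSet k (k + 3)) 4) ∧
    ((k = 8 ∨ k = 11) → IsLeast (radoSet k (k + 3)) 6) ∧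
    ((k = 6 ∨ k = 9 ∨ k = 10 ∨ 12 ≤ k) → IsLeast (radoSet k (k + 3)) 9) := by
  refine ⟨?_, ?_, ?_⟩
  · rintro (rfl | rfl | rfl | rfl | rfl | rfl) <;>
      exact ⟨mem_rado_of_finCheck _ _ 4 (by norm_num) (by decide),
        fun N hN => lb_rado _ _ 3 badCol (by decide) N hN⟩
  · rintro (rfl | rfl) <;>
      exact ⟨mem_rado_of_finCheck _ _ 6 (by norm_num) (by decide),
        fun N hN => lb_rado _ _ 5 badCol (by decide) N hN⟩
  · rintro (rfl | rfl | rfl | h12)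
    · exact ⟨mem9 6, fun N hN => lb_rado _ _ 8 badCol (by decide) N hN⟩
    · exact ⟨mem9 9, fun N hN => lb_rado _ _ 8 badCol (by decide) N hN⟩
    · exact ⟨mem9 10, fun N hN => lb_rado _ _ 8 badCol (by decide) N hN⟩
    · refine ⟨mem9 k, fun N hN => ?_⟩
      rcases le_or_gt 26 k with h26 | h26
      · exact lb9_large k h26 N hN
      · interval_cases k <;> exact lb_rado _ _ 8 badCol (by decide) N hN
end

section
/- Let k be a positive integer with k ≡ 1 (mod 4). Then RR(x+y+kz=2w) = (k+2)(k+3)/4 + 1; that is, N = (k+2)(k+3)/4 + 1 is the least positive integer such that every 2-coloring χ : {1,…,N} → {0,1} admits positive integers x,y,z,w ≤ N with χ(x)=χ(y)=χ(z)=χ(w) and x + y + k·z = 2w. -/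
private lemma fin2_eq_of_ne (a b d : Fin 2) (ha : a ≠ d) (hb : b ≠ d) : a = b := by
  fin_cases a <;> fin_cases b <;> fin_cases d <;> simp_all

/-- For `k ≡ 1 (mod 4)`, `RR(x + y + k*z = 2*w) = (k+2)*(k+3)/4 + 1`. -/
theorem RR_two_w_mod_four_one (k : ℕ) (hk : 0 < k) (h4 : k % 4 = 1) :
    IsLeast (radoSet k 2) ((k + 2) * (k + 3) / 4 + 1) := by
  obtain ⟨t, rfl⟩ : ∃ t, k = 4 * t + 1 := ⟨k / 4, by omega⟩
  obtain ⟨q, hq⟩ : ∃ q, q = t * t := ⟨t * t, rfl⟩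
  have hqt : t ≤ q := by
    rcases Nat.eq_zero_or_pos t with h | h
    · simp [hq, h]
    · rw [hq]; exact Nat.le_mul_of_pos_left t h
  have hNval : (4 * t + 1 + 2) * (4 * t + 1 + 3) / 4 + 1 = 4 * q + 7 * t + 4 := by
    rw [show (4 * t + 1 + 2) * (4 * t + 1 + 3) = 4 * (4 * q + 7 * t + 3) by rw [hq]; ring,
      Nat.mul_div_cancel_left _ (by norm_num : (0:ℕ) < 4)]
  rw [hNval]
  constructor
  · -- membership : every coloring of [1, 4q+7t+4] has a mono solution
    simp only [radoSet, Set.mem_setOf_eq]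
    refine ⟨by omega, ?_⟩
    intro χ
    by_contra hcon
    push_neg at hcon
    simp only [Finset.mem_Icc] at hcon
    have key : ∀ x y z w : ℕ, 1 ≤ x → x ≤ 4*q+7*t+4 → 1 ≤ y → y ≤ 4*q+7*t+4 →
        1 ≤ z → z ≤ 4*q+7*t+4 → 1 ≤ w → w ≤ 4*q+7*t+4 →
        χ x = χ y → χ y = χ z → χ z = χ w → x + y + (4*t+1) * z ≠ 2 * w := by
      intro x y z w hx1 hx2 hy1 hy2 hz1 hz2 hw1 hw2 e1 e2 e3
      exact hcon x y z w ⟨hx1, hx2⟩ ⟨hy1, hy2⟩ ⟨hz1, hz2⟩ ⟨hw1, hw2⟩ e1 e2 e3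
    set c0 := χ 1 with hc0
    have keyc : ∀ x y z w : ℕ, 1 ≤ x → x ≤ 4*q+7*t+4 → 1 ≤ y → y ≤ 4*q+7*t+4 →
        1 ≤ z → z ≤ 4*q+7*t+4 → 1 ≤ w → w ≤ 4*q+7*t+4 →
        χ x = c0 → χ y = c0 → χ z = c0 → χ w = c0 → x + y + (4*t+1) * z ≠ 2 * w := by
      intro x y z w a1 a2 a3 a4 a5 a6 a7 a8 hx hy hz hw
      exact key x y z w a1 a2 a3 a4 a5 a6 a7 a8 (hx.trans hy.symm) (hy.trans hz.symm)
        (hz.trans hw.symm)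
    have keyn : ∀ x y z w : ℕ, 1 ≤ x → x ≤ 4*q+7*t+4 → 1 ≤ y → y ≤ 4*q+7*t+4 →
        1 ≤ z → z ≤ 4*q+7*t+4 → 1 ≤ w → w ≤ 4*q+7*t+4 →
        χ x ≠ c0 → χ y ≠ c0 → χ z ≠ c0 → χ w ≠ c0 → x + y + (4*t+1) * z ≠ 2 * w := by
      intro x y z w a1 a2 a3 a4 a5 a6 a7 a8 hx hy hz hw
      exact key x y z w a1 a2 a3 a4 a5 a6 a7 a8 (fin2_eq_of_ne _ _ _ hx hy)
        (fin2_eq_of_ne _ _ _ hy hz) (fin2_eq_of_ne _ _ _ hz hw)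
    have h1c : χ 1 = c0 := rfl
    -- χ (k+1) ≠ c0, from the solution (1, k+1, 1, k+1)
    have hk1 : χ (4*t+2) ≠ c0 := by
      intro h
      exact keyc 1 (4*t+2) 1 (4*t+2) (by omega) (by omega) (by omega) (by omega)
        (by omega) (by omega) (by omega) (by omega) h1c h h1c h (by ring)
    by_cases h2 : χ 2 = c0
    · -- Case χ 2 = χ 1
      -- all i ≤ 2t+1 have color c0
      have claim1 : ∀ i, 1 ≤ i → i ≤ 2*t+1 → χ i = c0 := by
        intro i
        induction i using Nat.strong_induction_on with
        | _ i IH =>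
          intro hi1 hi2
          rcases eq_or_lt_of_le hi1 with h1 | h1
          · exact h1 ▸ h1c
          rcases (show i = 2 ∨ 3 ≤ i by omega) with h2' | h3
          · rw [h2']; exact h2
          by_contra hne
          rcases Nat.even_or_odd i with ⟨s, hs⟩ | ⟨s, hs⟩
          · -- i = s + s, s ≥ 2 ; use clause (i, 2(k+1), i, (s+1)(k+1))
            have hs2 : 2 ≤ s := by omega
            have hsc : χ (s+1) = c0 := IH (s+1) (by omega) (by omega) (by omega)
            have hA2 : χ (8*t+4) ≠ c0 := by
              intro h
              exact keyc 2 (8*t+4) 2 (8*t+4) (by omega) (by omega) (by omega) (by omega)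
                (by omega) (by omega) (by omega) (by omega) h2 h h2 h (by ring)
            have hAs : χ ((s+1)*(4*t+2)) ≠ c0 := by
              intro h
              have hb : (s+1)*(4*t+2) ≤ (t+1)*(4*t+2) := Nat.mul_le_mul_right _ (by omega)
              have hb2 : (t+1)*(4*t+2) = 4*q+6*t+2 := by rw [hq]; ring
              have hb1 : 1*1 ≤ (s+1)*(4*t+2) := Nat.mul_le_mul (by omega) (by omega)
              refine keyc (s+1) ((s+1)*(4*t+2)) (s+1) ((s+1)*(4*t+2)) (by omega) (by omega)
                (by omega) (by omega) (by omega) (by omega) (by omega) (by omega)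
                hsc h hsc h (by ring)
            have hb : (s+1)*(4*t+2) ≤ (t+1)*(4*t+2) := Nat.mul_le_mul_right _ (by omega)
            have hb2 : (t+1)*(4*t+2) = 4*q+6*t+2 := by rw [hq]; ring
            have hb1 : 1*1 ≤ (s+1)*(4*t+2) := Nat.mul_le_mul (by omega) (by omega)
            exact keyn i (8*t+4) i ((s+1)*(4*t+2)) (by omega) (by omega) (by omega) (by omega)
              (by omega) (by omega) (by omega) (by omega) hne hA2 hne hAs
              (by rw [hs]; ring)
          · -- i = 2s+1, s ≥ 1 ; use clause (i, k+1, i, (s+1)(k+1))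
            have hs1 : 1 ≤ s := by omega
            have hsc : χ (s+1) = c0 := IH (s+1) (by omega) (by omega) (by omega)
            have hAs : χ ((s+1)*(4*t+2)) ≠ c0 := by
              intro h
              have hb : (s+1)*(4*t+2) ≤ (t+1)*(4*t+2) := Nat.mul_le_mul_right _ (by omega)
              have hb2 : (t+1)*(4*t+2) = 4*q+6*t+2 := by rw [hq]; ring
              have hb1 : 1*1 ≤ (s+1)*(4*t+2) := Nat.mul_le_mul (by omega) (by omega)
              refine keyc (s+1) ((s+1)*(4*t+2)) (s+1) ((s+1)*(4*t+2)) (by omega) (by omega)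
                (by omega) (by omega) (by omega) (by omega) (by omega) (by omega)
                hsc h hsc h (by ring)
            have hb : (s+1)*(4*t+2) ≤ (t+1)*(4*t+2) := Nat.mul_le_mul_right _ (by omega)
            have hb2 : (t+1)*(4*t+2) = 4*q+6*t+2 := by rw [hq]; ring
            have hb1 : 1*1 ≤ (s+1)*(4*t+2) := Nat.mul_le_mul (by omega) (by omega)
            exact keyn i (4*t+2) i ((s+1)*(4*t+2)) (by omega) (by omega) (by omega) (by omega)
              (by omega) (by omega) (by omega) (by omega) hne hk1 hne hAs
              (by rw [hs]; ring)
      rcases Nat.eq_zero_or_pos t with ht0 | ht1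
      · -- t = 0, k = 1 : clause (1,2,1,2)
        subst ht0
        have hq0 : q = 0 := by simp [hq]
        exact keyc 1 2 1 2 (by omega) (by omega) (by omega) (by omega) (by omega) (by omega)
          (by omega) (by omega) h1c h2 h1c h2 (by omega)
      · -- t ≥ 1
        have F1 : χ (2*t+2) ≠ c0 := by
          intro h
          exact keyc 1 2 1 (2*t+2) (by omega) (by omega) (by omega) (by omega) (by omega)
            (by omega) (by omega) (by omega) h1c h2 h1c h (by ring)
        have F2 : χ (2*t+4) ≠ c0 := by
          intro h
          rcases (show t = 1 ∨ 2 ≤ t by omega) with ht1' | ht2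
          · subst ht1'
            have hq1 : q = 1 := by simp [hq]
            exact keyc 1 1 2 6 (by omega) (by omega) (by omega) (by omega) (by omega)
              (by omega) (by omega) (by omega) h1c h1c h2 (by norm_num at h ⊢; exact h) (by omega)
          · exact keyc 3 4 1 (2*t+4) (by omega) (by omega) (by omega) (by omega) (by omega)
              (by omega) (by omega) (by omega) (claim1 3 (by omega) (by omega))
              (claim1 4 (by omega) (by omega)) h1c h (by ring)
        have hexp1 : (4*t+1)*(2*t+2) = 8*q+10*t+2 := by rw [hq]; ring
        have F3 : χ (4*q+7*t+3) = c0 := by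
          by_contra h
          exact keyn (2*t+2) (2*t+2) (2*t+2) (4*q+7*t+3) (by omega) (by omega) (by omega)
            (by omega) (by omega) (by omega) (by omega) (by omega) F1 F1 F1 h (by omega)
        have F4 : χ (4*q+7*t+4) = c0 := by
          by_contra h
          exact keyn (2*t+2) (2*t+4) (2*t+2) (4*q+7*t+4) (by omega) (by omega) (by omega)
            (by omega) (by omega) (by omega) (by omega) (by omega) F1 F2 F1 h (by omega)
        have hexp2 : (4*t+1)*(t+1) = 4*q+5*t+1 := by rw [hq]; ring
        exact keyc (2*t+1) (4*q+7*t+4) (t+1) (4*q+7*t+3) (by omega) (by omega) (by omega)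
          (by omega) (by omega) (by omega) (by omega) (by omega)
          (claim1 (2*t+1) (by omega) (by omega)) F4 (claim1 (t+1) (by omega) (by omega)) F3
          (by omega)
    · -- Case χ 2 ≠ χ 1
      have G2 : χ (6*t+3) = c0 := by
        by_contra h
        exact keyn 2 (4*t+2) 2 (6*t+3) (by omega) (by omega) (by omega) (by omega) (by omega)
          (by omega) (by omega) (by omega) h2 hk1 h2 h (by ring)
      have G3 : χ (8*t+4) = c0 := by
        by_contra h
        exact keyn 2 (8*t+4) 2 (8*t+4) (by omega) (by omega) (by omega) (by omega) (by omega)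
          (by omega) (by omega) (by omega) h2 h h2 h (by ring)
      exact keyc 1 (8*t+4) 1 (6*t+3) (by omega) (by omega) (by omega) (by omega) (by omega)
        (by omega) (by omega) (by omega) h1c G3 h1c G2 (by ring)
  · -- lower bound : any B in the rado set satisfies 4q+7t+4 ≤ B
    intro B hB
    by_contra hlt
    push_neg at hlt
    simp only [radoSet, Set.mem_setOf_eq] at hB
    obtain ⟨hBpos, hprop⟩ := hB
    obtain ⟨x, y, z, w, hx, hy, hz, hw, e1, e2, e3, e4⟩ :=
      hprop (fun i => if i ≤ 2*t+1 ∨ i = 4*q+7*t+3 then (0 : Fin 2) else 1)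
    simp only [Finset.mem_Icc] at hx hy hz hw
    have hBM : B ≤ 4*q+7*t+3 := by omega
    have hiff : ∀ a b : ℕ,
        (if a ≤ 2*t+1 ∨ a = 4*q+7*t+3 then (0 : Fin 2) else 1) =
        (if b ≤ 2*t+1 ∨ b = 4*q+7*t+3 then (0 : Fin 2) else 1) →
        ((a ≤ 2*t+1 ∨ a = 4*q+7*t+3) ↔ (b ≤ 2*t+1 ∨ b = 4*q+7*t+3)) := by
      intro a b h
      by_cases ha : a ≤ 2*t+1 ∨ a = 4*q+7*t+3 <;>
        by_cases hb : b ≤ 2*t+1 ∨ b = 4*q+7*t+3 <;>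
        simp [ha, hb] at h ⊢
    have hxy := hiff _ _ e1
    have hyz := hiff _ _ e2
    have hzw := hiff _ _ e3
    have hz1 : 4*t+1 ≤ (4*t+1) * z := Nat.le_mul_of_pos_right _ (by omega)
    by_cases hPx : x ≤ 2*t+1 ∨ x = 4*q+7*t+3
    · -- all four have color 0
      have hPy := hxy.mp hPx
      have hPz := hyz.mp hPy
      have hPw := hzw.mp hPz
      -- w must be M
      have hwM : w = 4*q+7*t+3 := by
        rcases hPw with h | h
        · omega
        · exact h
      subst hwM
      rcases hPz with hzs | hzM
      · -- z small
        have hmain : ∀ u v : ℕ, u = 4*q+7*t+3 → v ≤ 2*t+1 → 1 ≤ v →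
            u + v + (4*t+1)*z ≠ 2*(4*q+7*t+3) := by
          intro u v hu hv hv1 hE
          subst hu
          have hE2 : v + (4*t+1)*z = 4*q+7*t+3 := by omega
          rcases le_or_gt z (t+1) with hzle | hzgt
          · have hm : (4*t+1)*z ≤ (4*t+1)*(t+1) := Nat.mul_le_mul_left _ hzle
            have hm2 : (4*t+1)*(t+1) = 4*q+5*t+1 := by rw [hq]; ring
            omega
          · have hm : (4*t+1)*(t+2) ≤ (4*t+1)*z := Nat.mul_le_mul_left _ (by omega)
            have hm2 : (4*t+1)*(t+2) = 4*q+9*t+2 := by rw [hq]; ring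
            omega
        rcases hPx with hxs | hxM
        · rcases hPy with hys | hyM
          · -- x, y, z all small
            have hm : (4*t+1)*z ≤ (4*t+1)*(2*t+1) := Nat.mul_le_mul_left _ hzs
            have hm2 : (4*t+1)*(2*t+1) = 8*q+6*t+1 := by rw [hq]; ring
            omega
          · exact hmain y x hyM hxs hx.1 (by omega)
        · rcases hPy with hys | hyM
          · exact hmain x y hxM hys hy.1 (by omega)
          · -- x = y = M
            omega
      · -- z = M
        subst hzM
        rcases Nat.eq_zero_or_pos t with ht0 | ht1
        · have hq0 : q = 0 := by simp [hq, ht0]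
          subst ht0
          rcases hPx with h | h <;> rcases hPy with h' | h' <;> omega
        · have hm : 5*(4*q+7*t+3) ≤ (4*t+1)*(4*q+7*t+3) := Nat.mul_le_mul_right _ (by omega)
          omega
    · -- all four have color 1
      have hPy : ¬(y ≤ 2*t+1 ∨ y = 4*q+7*t+3) := fun h => hPx (hxy.mpr h)
      have hPz : ¬(z ≤ 2*t+1 ∨ z = 4*q+7*t+3) := fun h => hPy (hyz.mpr h)
      have hPw : ¬(w ≤ 2*t+1 ∨ w = 4*q+7*t+3) := fun h => hPz (hzw.mpr h)
      have hx2 : 2*t+2 ≤ x := by by_contra hcc; exact hPx (by omega)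
      have hy2 : 2*t+2 ≤ y := by by_contra hcc; exact hPy (by omega)
      have hz2 : 2*t+2 ≤ z := by by_contra hcc; exact hPz (by omega)
      have hwne : w ≠ 4*q+7*t+3 := fun h => hPw (Or.inr h)
      have hm : (4*t+1)*(2*t+2) ≤ (4*t+1)*z := Nat.mul_le_mul_left _ hz2
      have hm2 : (4*t+1)*(2*t+2) = 8*q+10*t+2 := by rw [hq]; ring
      omega
end

section
/- Let k be a positive integer with k ≡ 3 (mod 4). Then RR(x+y+kz=2w) = (k+1)(k+4)/4 + 1; that is, N = (k+1)(k+4)/4 + 1 is the least positive integer such that every 2-coloring χ : {1,…,N} → {0,1} admits positive integers x,y,z,w ≤ N with χ(x)=χ(y)=χ(z)=χ(w) and x + y + k·z = 2w. -/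
open Set

def SolvableIn (k l : ℕ) (S : Set ℕ) : Prop :=
  ∃ x ∈ S, ∃ y ∈ S, ∃ z ∈ S, ∃ w ∈ S, x + y + k * z = l * w

theorem not_solvableIn_Icc {k l b c : ℕ} (h : l * c < (k + 2) * b) :
    ¬SolvableIn k l (Icc b c) := by
  rintro ⟨x, hx, y, hy, z, hz, w, hw, heq⟩
  have hlhs : (k + 2) * b ≤ x + y + k * z := by nlinarith [hx.1, hy.1, hz.1]
  have hrhs : l * w ≤ l * c := Nat.mul_le_mul_left l hw.2
  omega

/-- A colouring of `{1, …, N}` by red `R` and blue `B`, in which a number may get both colours,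
without monochromatic solution of `x + y + k z = l w`. -/
structure MonoFreeColoring (k l N : ℕ) (R B : Set ℕ) : Prop where
  cover : Icc 1 N ⊆ R ∪ B
  red : ¬SolvableIn k l R
  blue : ¬SolvableIn k l B

namespace MonoFreeColoring

variable {k l N w : ℕ} {R B : Set ℕ}

theorem symm (h : MonoFreeColoring k l N R B) : MonoFreeColoring k l N B R :=
  ⟨fun _ hx => (h.cover hx).symm, h.blue, h.red⟩

theorem blue_of_notMem_red (h : MonoFreeColoring k l N R B) (hw : w ∈ Icc 1 N) (hR : w ∉ R) :
    w ∈ B :=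
  (h.cover hw).resolve_left hR

theorem red_of_notMem_blue (h : MonoFreeColoring k l N R B) (hw : w ∈ Icc 1 N) (hB : w ∉ B) :
    w ∈ R :=
  (h.cover hw).resolve_right hB

end MonoFreeColoring

theorem mem_radoSet_iff {k l N : ℕ} :
    N ∈ radoSet k l ↔ 0 < N ∧ ∀ R B : Set ℕ, ¬MonoFreeColoring k l N R B := by
  classical
  simp only [radoSet, Set.mem_ofPred_eq, Finset.mem_Icc]
  refine and_congr_right fun _ => ⟨fun hχ R B h => ?_, fun hRB χ => ?_⟩
  · have hsame : ∀ {a b : ℕ}, (if a ∈ R then 0 else 1 : Fin 2) = (if b ∈ R then 0 else 1) →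
        (a ∈ R ↔ b ∈ R) := by
      intro a b
      split_ifs <;> simp_all
    obtain ⟨x, y, z, w, hx, hy, hz, hw, hxy, hyz, hzw, heq⟩ :=
      hχ fun a => if a ∈ R then 0 else 1
    replace hxy := hsame hxy
    replace hyz := hsame hyz
    replace hzw := hsame hzw
    by_cases hxR : x ∈ R
    · have hyR := hxy.1 hxR
      have hzR := hyz.1 hyR
      exact h.red ⟨x, hxR, y, hyR, z, hzR, w, hzw.1 hzR, heq⟩
    · have hyR := hxy.not.1 hxR
      have hzR := hyz.not.1 hyR
      exact h.blue ⟨x, h.blue_of_notMem_red hx hxR, y, h.blue_of_notMem_red hy hyR,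
        z, h.blue_of_notMem_red hz hzR, w, h.blue_of_notMem_red hw (hzw.not.1 hzR), heq⟩
  · by_contra! hfree
    refine hRB {a ∈ Icc 1 N | χ a = 0} {a ∈ Icc 1 N | χ a = 1}
      ⟨fun a ha => (em (χ a = 0)).imp (⟨ha, ·⟩) fun h => ⟨ha, by omega⟩, ?_, ?_⟩ <;>
    · rintro ⟨x, ⟨hx, hχx⟩, y, ⟨hy, hχy⟩, z, ⟨hz, hχz⟩, w, ⟨hw, hχw⟩, heq⟩
      exact hfree x y z w hx hy hz hw (by omega) (by omega) (by omega) heq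

theorem notMem_radoSet_of_lt_s18 {k l a M : ℕ} (ha : l * a < k + 2)
    (hM : l * M < (k + 2) * (a + 1)) : M ∉ radoSet k l := fun hmem =>
  (mem_radoSet_iff.1 hmem).2 (Icc 1 a) (Icc (a + 1) M)
    ⟨fun x hx => (le_or_gt x a).imp (fun h => ⟨hx.1, h⟩) (fun h => ⟨h, hx.2⟩),
      not_solvableIn_Icc (by simpa using ha), not_solvableIn_Icc hM⟩

namespace MonoFreeColoring

variable {m N : ℕ} {R B : Set ℕ}

theorem false_of_two_mem_blue (h : MonoFreeColoring (4 * m + 3) 2 N R B) (hN : 8 * m + 8 ≤ N)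
    (h1 : 1 ∈ R) (h2 : 2 ∈ B) : False := by
  have b₁ : 4 * m + 4 ∈ B := h.blue_of_notMem_red ⟨by omega, by omega⟩
    fun r => h.red ⟨1, h1, _, r, 1, h1, _, r, by ring⟩
  have r₁ : 4 * m + 5 ∈ R := h.red_of_notMem_blue ⟨by omega, by omega⟩
    fun b => h.blue ⟨2, h2, 2, h2, 2, h2, _, b, by ring⟩
  have b₂ : 4 * m + 6 ∈ B := h.blue_of_notMem_red ⟨by omega, by omega⟩
    fun r => h.red ⟨1, h1, _, r, 1, h1, _, r₁, by ring⟩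
  have r₂ : 8 * m + 8 ∈ R := h.red_of_notMem_blue ⟨by omega, by omega⟩
    fun b => h.blue ⟨_, b₁, _, b₂, 2, h2, _, b, by ring⟩
  exact h.red ⟨_, r₁, _, r₂, 1, h1, _, r₂, by ring⟩

theorem false_of_even_least_blue (h : MonoFreeColoring (4 * m + 3) 2 N R B) {v : ℕ}
    (hv : 2 ≤ v) (hN : 4 * m + 4 + (4 * m + 3) * v ≤ N) (hred : Ico 1 (2 * v) ⊆ R)
    (hblue : 2 * v ∈ B) : False := by
  have h1 : 1 ∈ R := hred ⟨le_rfl, by omega⟩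
  have h2 : 2 ∈ R := hred ⟨by omega, by omega⟩
  have hvR : v ∈ R := hred ⟨by omega, by omega⟩
  have b₁ : 4 * m + 4 ∈ B := h.blue_of_notMem_red ⟨by omega, by omega⟩
    fun r => h.red ⟨1, h1, 1, h1, 2, h2, _, r, by ring⟩
  have b₂ : 2 * m + 3 ∈ B := h.blue_of_notMem_red ⟨by omega, by omega⟩
    fun r => h.red ⟨1, h1, 2, h2, 1, h1, _, r, by ring⟩
  have r₁ : 2 * m + 3 + (4 * m + 3) * v ∈ R := h.red_of_notMem_blue ⟨by omega, by omega⟩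
    fun b => h.blue ⟨_, b₂, _, b₂, _, hblue, _, b, by ring⟩
  have r₂ : 4 * m + 4 + (4 * m + 3) * v ∈ R := h.red_of_notMem_blue ⟨by omega, by omega⟩
    fun b => h.blue ⟨_, b₁, _, b₁, _, hblue, _, b, by ring⟩
  exact h.red ⟨2, h2, _, r₂, v, hvR, _, r₁, by ring⟩

theorem false_of_odd_least_blue (h : MonoFreeColoring (4 * m + 3) 2 N R B) {u : ℕ}
    (hu : 1 ≤ u) (hN : 4 * (u + 1) * (m + 1) ≤ N) (hred : Ico 1 (2 * u + 1) ⊆ R)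
    (hblue : 2 * u + 1 ∈ B) : False := by
  have h1 : 1 ∈ R := hred ⟨le_rfl, by omega⟩
  have h2 : 2 ∈ R := hred ⟨by omega, by omega⟩
  have huR : u + 1 ∈ R := hred ⟨by omega, by omega⟩
  have b₁ : 4 * m + 4 ∈ B := h.blue_of_notMem_red ⟨by omega, by nlinarith⟩
    fun r => h.red ⟨1, h1, 1, h1, 2, h2, _, r, by ring⟩
  have r₁ : 4 * (u + 1) * (m + 1) ∈ R := h.red_of_notMem_blue ⟨by nlinarith, hN⟩
    fun b => h.blue ⟨_, hblue, _, b₁, _, hblue, _, b, by ring⟩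
  exact h.red ⟨_, huR, _, r₁, _, huR, _, r₁, by ring⟩

theorem false_of_least_blue_eq_two_mul_add_three (h : MonoFreeColoring (4 * m + 3) 2 N R B)
    (hN : 4 * m ^ 2 + 11 * m + 8 ≤ N) (hred : Ico 1 (2 * m + 3) ⊆ R)
    (hblue : 2 * m + 3 ∈ B) : False := by
  have h1 : 1 ∈ R := hred ⟨le_rfl, by omega⟩
  have h2 : 2 ∈ R := hred ⟨by omega, by omega⟩
  have hmR : m + 2 ∈ R := hred ⟨by omega, by omega⟩
  have b₁ : 2 * m + 4 ∈ B := h.blue_of_notMem_red ⟨by omega, by nlinarith⟩ fun r => by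
    rcases Nat.eq_zero_or_pos m with rfl | hm
    · exact h.red ⟨1, h1, 1, h1, 2, h2, _, r, by ring⟩
    · exact h.red ⟨2, h2, 3, hred ⟨by omega, by omega⟩, 1, h1, _, r, by ring⟩
  have r₁ : 4 * m ^ 2 + 11 * m + 8 ∈ R := h.red_of_notMem_blue ⟨by omega, hN⟩
    fun b => h.blue ⟨_, hblue, _, b₁, _, hblue, _, b, by ring⟩
  exact h.red ⟨2, h2, _, r₁, _, hmR, _, r₁, by ring⟩

end MonoFreeColoring

theorem exists_least_notMem_of_one_mem {R : Set ℕ} (h1 : 1 ∈ R) (hex : ∃ t, 2 ≤ t ∧ t ∉ R) :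
    ∃ t, 2 ≤ t ∧ t ∉ R ∧ Ico 1 t ⊆ R := by
  classical
  obtain ⟨ht2, htR⟩ := Nat.find_spec hex
  refine ⟨Nat.find hex, ht2, htR, fun j ⟨hj1, hjt⟩ => ?_⟩
  obtain rfl | hj2 := eq_or_lt_of_le hj1
  · exact h1
  · by_contra hjR
    exact Nat.find_min hex hjt ⟨hj2, hjR⟩

theorem not_monoFreeColoring_four_mul_add_three {m N : ℕ} {R B : Set ℕ}
    (hN : 4 * m ^ 2 + 11 * m + 8 ≤ N) :
    ¬MonoFreeColoring (4 * m + 3) 2 N R B := by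
  intro h
  wlog h1 : 1 ∈ R generalizing R B
  · exact this h.symm (h.blue_of_notMem_red ⟨le_rfl, by omega⟩ h1)
  obtain ⟨t, ht2, htR, hred⟩ : ∃ t, 2 ≤ t ∧ t ∉ R ∧ Ico 1 t ⊆ R := by
    refine exists_least_notMem_of_one_mem h1 ?_
    by_contra! hall
    exact h.red ⟨1, h1, 2, hall 2 le_rfl, 1, h1, _, hall (2 * m + 3) (by omega), by ring⟩
  have ht : t ≤ 2 * m + 3 := by
    by_contra! hlt
    exact h.red ⟨1, h1, 2, hred ⟨by omega, by omega⟩, 1, h1, _, hred ⟨by omega, hlt⟩, by ring⟩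
  have htB : t ∈ B := h.blue_of_notMem_red ⟨by omega, by omega⟩ htR
  obtain ⟨u, rfl | rfl⟩ := Nat.even_or_odd' t
  · obtain rfl | hu := eq_or_lt_of_le (show 1 ≤ u by omega)
    · exact h.false_of_two_mem_blue (by omega) h1 htB
    · have hvN : (4 * m + 3) * u ≤ (4 * m + 3) * (m + 1) := Nat.mul_le_mul_left _ (by omega)
      exact h.false_of_even_least_blue hu (by nlinarith) hred htB
  · rcases le_or_gt u m with hu | hu
    · exact h.false_of_odd_least_blue (by omega) (by nlinarith) hred htB
    · obtain rfl : u = m + 1 := by omega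
      exact h.false_of_least_blue_eq_two_mul_add_three hN hred htB

theorem RR_two_w_mod_four_three_general (k : ℕ) (h4 : k % 4 = 3) :
    IsLeast (radoSet k 2) ((k + 1) * (k + 4) / 4 + 1) := by
  obtain ⟨m, rfl⟩ : ∃ m, k = 4 * m + 3 := ⟨k / 4, by omega⟩
  have hN : (4 * m + 3 + 1) * (4 * m + 3 + 4) / 4 + 1 = 4 * m ^ 2 + 11 * m + 8 := by
    rw [show (4 * m + 3 + 1) * (4 * m + 3 + 4) = 4 * (4 * m ^ 2 + 11 * m + 7) by ring,
      Nat.mul_div_cancel_left _ (by norm_num)]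
  rw [hN]
  refine ⟨mem_radoSet_iff.2 ⟨by positivity,
    fun _ _ => not_monoFreeColoring_four_mul_add_three le_rfl⟩, fun M hM => ?_⟩
  by_contra! hlt
  exact notMem_radoSet_of_lt_s18 (a := 2 * m + 2) (by omega) (by nlinarith) hM

/-- For `k ≡ 3 (mod 4)`, `RR(x + y + k*z = 2*w) = (k+1)*(k+4)/4 + 1`. -/
theorem RR_two_w_mod_four_three (k : ℕ) (hk : 0 < k) (h4 : k % 4 = 3) :
    IsLeast (radoSet k 2) ((k + 1) * (k + 4) / 4 + 1) :=
  RR_two_w_mod_four_three_general k h4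
end

section
/- Let k be a positive integer with k ≡ 0 (mod 4), and let χ : {1,…,k(k+4)/4} → {0,1} be the 2-coloring with χ(i) = 0 if 1 ≤ i ≤ k/2 and χ(i) = 1 if k/2 < i ≤ k(k+4)/4. Then there are no x, y, z, w ∈ {1,…,k(k+4)/4} with χ(x)=χ(y)=χ(z)=χ(w) and x + y + k·z = 2w. -/
/-!
Write `k = 2j`, so that the coloring splits `{1, …, j(j+2)}` into `[1, j]` and `[j+1, j(j+2)]`.
On the lower block `2w ≤ 2j = k < x + y + kz`; on the upper block
`x + y + kz ≥ (k+2)(j+1) = 2j(j+2) + 2 > 2w`. So no solution lies in a single block.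
-/

lemma two_mul_lt_of_le_half {k x y z w : ℕ} (hx : 1 ≤ x) (hy : 1 ≤ y) (hz : 1 ≤ z)
    (hw : w ≤ k / 2) : 2 * w < x + y + k * z := by
  have : k ≤ k * z := Nat.le_mul_of_pos_right k hz
  omega

lemma two_mul_lt_of_half_lt {k x y z w : ℕ} (hk : Even k) (hx : k / 2 < x) (hy : k / 2 < y)
    (hz : k / 2 < z) (hw : w ≤ k * (k + 4) / 4) : 2 * w < x + y + k * z := by
  obtain ⟨j, rfl⟩ := hk
  have hhalf : (j + j) / 2 = j := by omega
  have hN : (j + j) * (j + j + 4) / 4 = j * (j + 2) := by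
    rw [show (j + j) * (j + j + 4) = j * (j + 2) * 4 by ring, Nat.mul_div_cancel _ four_pos]
  rw [hhalf] at hx hy hz
  rw [hN] at hw
  nlinarith

lemma Fin.ite_zero_one_eq_ite_zero_one_iff {p q : Prop} [Decidable p] [Decidable q] :
    ((if p then 0 else 1 : Fin 2) = if q then 0 else 1) ↔ (p ↔ q) := by
  split_ifs <;> simp_all

theorem no_mono_solution_interval_coloring_general (k : ℕ) (h4 : k % 4 = 0)
    (χ : ℕ → Fin 2)
    (hχ : ∀ i, 1 ≤ i → i ≤ k * (k + 4) / 4 → χ i = if i ≤ k / 2 then 0 else 1) :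
    ¬ ∃ x y z w : ℕ, x ∈ Finset.Icc 1 (k * (k + 4) / 4) ∧ y ∈ Finset.Icc 1 (k * (k + 4) / 4) ∧ z ∈ Finset.Icc 1 (k * (k + 4) / 4) ∧ w ∈ Finset.Icc 1 (k * (k + 4) / 4) ∧
      χ x = χ y ∧ χ y = χ z ∧ χ z = χ w ∧ x + y + k * z = 2 * w := by
  rintro ⟨x, y, z, w, hx, hy, hz, hw, hxy, hyz, hzw, heq⟩
  simp only [Finset.mem_Icc] at hx hy hz hw
  have same_block : ∀ {i j}, 1 ≤ i ∧ i ≤ k * (k + 4) / 4 → 1 ≤ j ∧ j ≤ k * (k + 4) / 4 →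
      χ i = χ j → (i ≤ k / 2 ↔ j ≤ k / 2) := fun hi hj hij => by
    rwa [hχ _ hi.1 hi.2, hχ _ hj.1 hj.2, Fin.ite_zero_one_eq_ite_zero_one_iff] at hij
  by_cases hlow : w ≤ k / 2
  · exact (two_mul_lt_of_le_half hx.1 hy.1 hz.1 hlow).ne' heq
  · have high : ∀ {i}, 1 ≤ i ∧ i ≤ k * (k + 4) / 4 → χ i = χ w → k / 2 < i :=
      fun hi hiw => not_le.1 fun h => hlow ((same_block hi hw hiw).1 h)
    have hk : Even k := Nat.even_iff.2 (by omega)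
    exact (two_mul_lt_of_half_lt hk (high hx (hxy.trans (hyz.trans hzw)))
      (high hy (hyz.trans hzw)) (high hz hzw) hw.2).ne' heq

/-- For `k ≡ 0 (mod 4)`, the coloring of `{1, ..., k*(k+4)/4}` giving color 0 to
`[1, k/2]` and color 1 to the rest admits no monochromatic solution to
`x + y + k*z = 2*w`. -/
theorem no_mono_solution_interval_coloring (k : ℕ) (hk : 0 < k) (h4 : k % 4 = 0)
    (χ : ℕ → Fin 2)
    (hχ : ∀ i, 1 ≤ i → i ≤ k * (k + 4) / 4 → χ i = if i ≤ k / 2 then 0 else 1) :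
    ¬ ∃ x y z w : ℕ, x ∈ Finset.Icc 1 (k * (k + 4) / 4) ∧ y ∈ Finset.Icc 1 (k * (k + 4) / 4) ∧ z ∈ Finset.Icc 1 (k * (k + 4) / 4) ∧ w ∈ Finset.Icc 1 (k * (k + 4) / 4) ∧
      χ x = χ y ∧ χ y = χ z ∧ χ z = χ w ∧ x + y + k * z = 2 * w :=
  no_mono_solution_interval_coloring_general k h4 χ hχ
end
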